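/- arXiv:2306.11186 — 2 statements merged into one kernel-verified Lean document; each statement's English description precedes it below -/
import Mathlib

section
/- The critical cells of the Morse matching M on the enhanced words of the 3-strand torus braid (σ_1σ_2)^k are exactly the enhanced words of the following five forms: 1…1 00^x 1 00^x 1 … 00^x 1 0; 1…1 00^x 1 00^x 1 … 00^x 1 01; 1…1 00^x 1 00^x 1 … 00^x 1 001; 1…1 00^x 1 00^x 1 … 00^x 1 00; and 1…1 (all ones). Consequently, every homological degree of the Morse complex M⟦(σ_1σ_2)^k⟧_Enh contains at most 2 critical cells. -/
/-!
STATEMENT 14: The critical cells of the Morse matching `M` on the enhanced words of the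
3-strand torus braid `(σ₁σ₂)^k` are exactly the enhanced words of the five forms
`1…1 (00^x1)^b 0`, `1…1 (00^x1)^b 01`, `1…1 (00^x1)^b 001`, `1…1 (00^x1)^b 00`, and
`1…1`; consequently every homological degree contains at most 2 critical cells.
-/

namespace Stmt14

/-- The symbols: `zx = 0^x`, `z1 = 0^1`, `zm = 0^-`, `om = 1^-`. -/
inductive Sym : Type
  | zx | z1 | zm | om
  deriving DecidableEq

open Sym

/-- Words are functions `ℕ → Sym`; a word of length `n` is padded with `om` beyond `n`. -/
abbrev Word : Type := ℕ → Sym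

/-- A symbol is a zero-smoothing. -/
def isZ (s : Sym) : Prop := s ≠ om

/-- An enhanced word of length `n` for the 3-strand torus braid (with `n = 2k` for
`(σ₁σ₂)^k`): padded by `om` beyond `n`, and a `0` carries superscript `x` or `1` iff it is
followed by an odd number of `1`'s and then a `0` (so that a circle is split there); all
other letters carry `-`. -/
def Valid3 (n : ℕ) (w : Word) : Prop :=
  (∀ i, n ≤ i → w i = om) ∧
  ∀ i < n, ((w i = zx ∨ w i = z1) ↔
    (isZ (w i) ∧ ∃ j, i < j ∧ j < n ∧ isZ (w j) ∧
      (∀ l, i < l → l < j → w l = om) ∧ Odd (j - i - 1)))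

/-- The prefix pattern `1…1 (0 0^x 1)^b` of total length `p = a + 3b`. -/
def Prefix3 (z : Word) (p : ℕ) : Prop :=
  ∃ a b, p = a + 3 * b ∧ (∀ i, i < a → z i = om) ∧
    ∀ t, t < b → z (a + 3 * t) = zm ∧ z (a + 3 * t + 1) = zx ∧ z (a + 3 * t + 2) = om

/-- The three matching patterns of the Morse matching for 3-torus braids, at position `p`
(after a prefix `1…1 (0 0^x 1)^*`):
`0^1 1 0^s ↗ 0^s 1 1`, `0 0^1 1 0^s ↗ 0 0^s 1 1`, and `0 0 0^s ↗ 0^x 1 0^s`. -/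
def Mpat3 (n : ℕ) (z x : Word) : Prop :=
  ∃ p, Prefix3 z p ∧
    ( -- pattern (a): `z = … 0^1 1 0^s y`, `x = … 0^s 1 1 y`
      (p + 2 < n ∧ z p = z1 ∧ z (p + 1) = om ∧ isZ (z (p + 2)) ∧
        x p = z (p + 2) ∧ x (p + 1) = om ∧ x (p + 2) = om ∧
        (∀ i, i ≠ p → i ≠ p + 1 → i ≠ p + 2 → x i = z i)) ∨
      -- pattern (b): `z = … 0 0^1 1 0^s y`, `x = … 0 0^s 1 1 y`
      (p + 3 < n ∧ z p = zm ∧ z (p + 1) = z1 ∧ z (p + 2) = om ∧ isZ (z (p + 3)) ∧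
        x (p + 1) = z (p + 3) ∧ x (p + 2) = om ∧ x (p + 3) = om ∧
        (∀ i, i ≠ p + 1 → i ≠ p + 2 → i ≠ p + 3 → x i = z i)) ∨
      -- pattern (c): `z = … 0 0 0^s y`, `x = … 0^x 1 0^s y`
      (p + 2 < n ∧ z p = zm ∧ z (p + 1) = zm ∧ isZ (z (p + 2)) ∧
        x p = zx ∧ x (p + 1) = om ∧
        (∀ i, i ≠ p → i ≠ p + 1 → x i = z i)))

/-- The Morse matching `M` on enhanced words of `(σ₁σ₂)^k` (with `n = 2k`). -/
def MM3 (n : ℕ) (z x : Word) : Prop := Valid3 n z ∧ Valid3 n x ∧ Mpat3 n z x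

/-- A critical (unmatched) cell. -/
def Critical3 (n : ℕ) (w : Word) : Prop :=
  Valid3 n w ∧ (∀ x, ¬ MM3 n w x) ∧ (∀ z, ¬ MM3 n z w)

/-- The homological degree of an enhanced word: (number of ones) − n. -/
def hdeg3 (n : ℕ) (w : Word) : ℤ :=
  (((Finset.range n).filter fun i => w i = om).card : ℤ) - n


/-- The five forms of the critical cells. -/
def Shape5 (n : ℕ) (w : Word) : Prop :=
  ∃ p, Prefix3 w p ∧
    ( (p + 1 = n ∧ w p = zm) ∨                                   -- `… 0`
      (p + 2 = n ∧ w p = zm ∧ w (p + 1) = om) ∨                  -- `… 01`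
      (p + 3 = n ∧ w p = zm ∧ w (p + 1) = zm ∧ w (p + 2) = om) ∨ -- `… 001`
      (p + 2 = n ∧ w p = zm ∧ w (p + 1) = zm) ∨                  -- `… 00`
      (p = n))                                                   -- `1…1`


section Infra

open Sym

/-- "There is a zero after `m` (within `n`) at odd distance, all ones in between." -/
def Ex (n : ℕ) (z : Word) (m : ℕ) : Prop :=
  ∃ j, m < j ∧ j < n ∧ isZ (z j) ∧ (∀ l, m < l → l < j → z l = om) ∧ Odd (j - m - 1)

lemma valid3_iff {n : ℕ} {w : Word} :
    Valid3 n w ↔ ((∀ i, n ≤ i → w i = om) ∧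
      ∀ i < n, isZ (w i) → ((w i = zx ∨ w i = z1) ↔ Ex n w i)) := by
  constructor
  · rintro ⟨h1, h2⟩
    refine ⟨h1, fun i hi hz => ?_⟩
    constructor
    · intro h; exact ((h2 i hi).1 h).2
    · intro h; exact (h2 i hi).2 ⟨hz, h⟩
  · rintro ⟨h1, h2⟩
    refine ⟨h1, fun i hi => ?_⟩
    by_cases hz : isZ (w i)
    · constructor
      · intro h; exact ⟨hz, (h2 i hi hz).1 h⟩
      · intro h; exact (h2 i hi hz).2 h.2
    · simp only [isZ, not_not] at hz
      constructor
      · intro h; rcases h with h | h <;> simp [hz] at h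
      · intro h; exact absurd h.1 (by simp [hz, isZ])

lemma ex_first {n : ℕ} {z : Word} {m j : ℕ} (h1 : m < j)
    (h2 : ∀ l, m < l → l < j → z l = om) (h3 : isZ (z j)) (h4 : j < n) :
    Ex n z m ↔ Odd (j - m - 1) := by
  constructor
  · rintro ⟨j', hj1, hj2, hj3, hj4, hj5⟩
    have : j' = j := by
      rcases lt_trichotomy j' j with h | h | h
      · exact absurd (h2 j' hj1 h) hj3
      · exact h
      · exact absurd (hj4 j h1 h) h3
    subst this; exact hj5
  · intro h; exact ⟨j, h1, h4, h3, h2, h⟩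

lemma ex_not {n : ℕ} {z : Word} {m : ℕ} (h : ∀ l, m < l → l < n → z l = om) :
    ¬ Ex n z m := by
  rintro ⟨j, hj1, hj2, hj3, _, _⟩
  exact hj3 (h j hj1 hj2)

lemma ex_shift {n : ℕ} {z w : Word} {m i : ℕ} (him : m ≤ i)
    (heq : ∀ l, i < l → z l = w l) (hrun : ∀ l, m < l → l ≤ i → z l = om)
    (hpar : (i - m) % 2 = 0) : Ex n z m ↔ Ex n w i := by
  constructor
  · rintro ⟨j, hj1, hj2, hj3, hj4, hj5⟩
    have hji : i < j := by
      by_contra h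
      exact hj3 (hrun j hj1 (by omega))
    refine ⟨j, hji, hj2, by rw [← heq j hji]; exact hj3, fun l hl1 hl2 => ?_, ?_⟩
    · rw [← heq l hl1]; exact hj4 l (by omega) hl2
    · rw [Nat.odd_iff] at hj5 ⊢; omega
  · rintro ⟨j, hj1, hj2, hj3, hj4, hj5⟩
    refine ⟨j, by omega, hj2, by rw [heq j hj1]; exact hj3, fun l hl1 hl2 => ?_, ?_⟩
    · rcases le_or_gt l i with h | h
      · exact hrun l hl1 h
      · rw [heq l h]; exact hj4 l h hl2
    · rw [Nat.odd_iff] at hj5 ⊢; omega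

lemma valid_pad {n : ℕ} {w : Word} (hv : Valid3 n w) : ∀ i, n ≤ i → w i = om := hv.1

lemma valid_ex {n : ℕ} {w : Word} (hv : Valid3 n w) {i : ℕ} (hi : i < n)
    (hz : isZ (w i)) : (w i = zx ∨ w i = z1) ↔ Ex n w i :=
  (valid3_iff.1 hv).2 i hi hz

lemma valid_zm_not_ex {n : ℕ} {w : Word} (hv : Valid3 n w) {i : ℕ} (hi : i < n)
    (hz : w i = zm) : ¬ Ex n w i := by
  intro h
  have := (valid_ex hv hi (by simp [isZ, hz])).2 h
  simp [hz] at this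

lemma valid_ex_of {n : ℕ} {w : Word} (hv : Valid3 n w) {i : ℕ} (hi : i < n)
    (hz : w i = zx ∨ w i = z1) : Ex n w i := by
  have hiz : isZ (w i) := by rcases hz with h | h <;> simp [isZ, h]
  exact (valid_ex hv hi hiz).1 hz

/-- Validity on the prefix region `[0, a+3b)`, provided position `a+3b` carries a zero. -/
lemma prefix_valid {n : ℕ} {z : Word} {a b : ℕ}
    (h1 : ∀ i, i < a → z i = om)
    (h2 : ∀ t, t < b → z (a + 3 * t) = zm ∧ z (a + 3 * t + 1) = zx ∧ z (a + 3 * t + 2) = om)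
    (hz : isZ (z (a + 3 * b))) (hn : a + 3 * b < n) :
    ∀ i, i < a + 3 * b → isZ (z i) → ((z i = zx ∨ z i = z1) ↔ Ex n z i) := by
  intro i hi hiz
  rcases lt_or_ge i a with hia | hia
  · exact absurd (h1 i hia) hiz
  · set t := (i - a) / 3 with ht
    have hr : i = a + 3 * t ∨ i = a + 3 * t + 1 ∨ i = a + 3 * t + 2 := by omega
    have htb : t < b := by omega
    obtain ⟨g0, g1, g2⟩ := h2 t htb
    rcases hr with h | h | h
    · -- `zm`, next zero immediately after: even gap 0
      rw [h, g0]
      rw [ex_first (n := n) (z := z) (m := a + 3 * t) (j := a + 3 * t + 1)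
        (by omega) (by omega) (by simp [isZ, g1]) (by omega)]
      simp [Nat.odd_iff]
    · -- `zx`, next zero at distance 2: odd gap 1
      have hz3 : isZ (z (a + 3 * t + 3)) := by
        rcases Nat.lt_or_ge (t + 1) b with h' | h'
        · have := (h2 (t + 1) h').1
          have e : a + 3 * (t + 1) = a + 3 * t + 3 := by ring
          rw [e] at this; simp [isZ, this]
        · have : t + 1 = b := by omega
          subst this
          have e : a + 3 * t + 3 = a + 3 * (t + 1) := by ring
          rw [e]; exact hz
      rw [h, g1]
      rw [ex_first (n := n) (z := z) (m := a + 3 * t + 1) (j := a + 3 * t + 3)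
        (by omega) (fun l hl1 hl2 => by
          have : l = a + 3 * t + 2 := by omega
          rw [this]; exact g2) hz3 (by omega)]
      simp [Nat.odd_iff]
    · rw [h] at hiz; exact absurd g2 hiz

end Infra


section Constructions

open Sym

variable {n a b : ℕ} {w : Word}

lemma valid3_build {n : ℕ} {z : Word} (hpad : ∀ i, n ≤ i → z i = om)
    (h : ∀ i, i < n → isZ (z i) → ((z i = zx ∨ z i = z1) ↔ Ex n z i)) : Valid3 n z :=
  valid3_iff.2 ⟨hpad, h⟩

lemma valid_tail_iff {n : ℕ} {z w : Word} (hv : Valid3 n w) {i : ℕ} (hi : i < n)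
    (heq : ∀ l, i ≤ l → z l = w l) (hz : isZ (z i)) :
    (z i = zx ∨ z i = z1) ↔ Ex n z i := by
  have e := ex_shift (n := n) (z := z) (w := w) (le_refl i)
    (fun l hl => heq l (le_of_lt hl))
    (fun l hl1 hl2 => absurd (hl1.trans_le hl2) (lt_irrefl i)) (by simp)
  rw [heq i le_rfl] at hz ⊢
  rw [e]
  exact valid_ex hv hi hz

/-- Case B0: `w = 1^a (00^x1)^(b+1) 1 …`; `w` is the target of pattern (b). -/
lemma matched_B0 (hv : Valid3 n w)
    (h1 : ∀ i, i < a → w i = om)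
    (h2 : ∀ t, t < b + 1 → w (a + 3 * t) = zm ∧ w (a + 3 * t + 1) = zx ∧ w (a + 3 * t + 2) = om)
    (hpn : a + 3 * b + 3 < n) (hom : w (a + 3 * b + 3) = om) :
    ∃ z, MM3 n z w := by
  set q := a + 3 * b with hq
  obtain ⟨g0, g1, g2⟩ := h2 b (by omega)
  rw [← hq] at g0 g1 g2
  set z : Word := fun i => if i = q + 1 then z1 else if i = q + 3 then zx else w i with hzdef
  have hz1 : z (q + 1) = z1 := by simp [hzdef]
  have hz3 : z (q + 3) = zx := by simp [hzdef]
  have hzel : ∀ i, i ≠ q + 1 → i ≠ q + 3 → z i = w i := by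
    intro i h h'; simp [hzdef, h, h']
  obtain ⟨j, hj1, hj2, hj3, hj4, hj5⟩ := valid_ex_of hv (show q + 1 < n by omega) (Or.inl g1)
  have hjq : q + 3 < j := by
    by_contra h
    have : j = q + 2 ∨ j = q + 3 := by omega
    rcases this with rfl | rfl
    · exact hj3 g2
    · exact hj3 hom
  refine ⟨z, valid3_build ?_ ?_, hv, ?_⟩
  · intro i hi; rw [hzel i (by omega) (by omega)]; exact hv.1 i hi
  · intro i hi hiz
    have hmain : i < q ∨ i = q ∨ i = q + 1 ∨ i = q + 2 ∨ i = q + 3 ∨ q + 4 ≤ i := by omega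
    rcases hmain with h | rfl | rfl | rfl | rfl | h
    · refine prefix_valid (fun i hi => by rw [hzel i (by omega) (by omega)]; exact h1 i hi)
        (fun t ht => ?_) (by rw [hzel q (by omega) (by omega), g0]; simp [isZ]) (by omega) i h hiz
      have ht3 : a + 3 * t + 2 < q := by omega
      rw [hzel _ (by omega) (by omega), hzel _ (by omega) (by omega), hzel _ (by omega) (by omega)]
      exact h2 t (by omega)
    · rw [hzel q (by omega) (by omega), g0,
        ex_first (n := n) (show q < q + 1 by omega)
          (fun l hl1 hl2 => absurd hl1 (by omega)) (by rw [hz1]; simp [isZ]) (by omega)]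
      simp [Nat.odd_iff]
    · rw [hz1, ex_first (n := n) (show q + 1 < q + 3 by omega)
        (fun l hl1 hl2 => by
          have : l = q + 2 := by omega
          rw [this, hzel _ (by omega) (by omega)]; exact g2)
        (by rw [hz3]; simp [isZ]) (by omega)]
      simp [Nat.odd_iff]
    · rw [hzel _ (by omega) (by omega)] at hiz; exact absurd g2 hiz
    · rw [hz3]
      refine iff_of_true (Or.inl rfl) ⟨j, by omega, hj2,
        by rw [hzel j (by omega) (by omega)]; exact hj3,
        fun l hl1 hl2 => by rw [hzel l (by omega) (by omega)]; exact hj4 l (by omega) hl2, ?_⟩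
      rw [Nat.odd_iff] at hj5 ⊢; omega
    · exact valid_tail_iff hv hi (fun l hl => hzel l (by omega) (by omega)) hiz
  · refine ⟨q, ⟨a, b, hq, fun i hi => by rw [hzel i (by omega) (by omega)]; exact h1 i hi,
      fun t ht => ?_⟩, Or.inr (Or.inl ?_)⟩
    · have ht3 : a + 3 * t + 2 < q := by omega
      rw [hzel _ (by omega) (by omega), hzel _ (by omega) (by omega), hzel _ (by omega) (by omega)]
      exact h2 t (by omega)
    · refine ⟨by omega, by rw [hzel q (by omega) (by omega)]; exact g0, hz1,
        by rw [hzel _ (by omega) (by omega)]; exact g2, by rw [hz3]; simp [isZ],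
        by rw [hz3, g1], g2, hom, fun i hi1 hi2 hi3 => (hzel i hi1 hi3).symm⟩


/-- Case B1 gap 1: `w = … 0^1 1 0^s …`; source of pattern (a). -/
lemma matched_A1 (hv : Valid3 n w)
    (h1 : ∀ i, i < a → w i = om)
    (h2 : ∀ t, t < b → w (a + 3 * t) = zm ∧ w (a + 3 * t + 1) = zx ∧ w (a + 3 * t + 2) = om)
    (g0 : w (a + 3 * b) = z1) (g1 : w (a + 3 * b + 1) = om)
    (g2 : isZ (w (a + 3 * b + 2))) (hn : a + 3 * b + 2 < n) :
    ∃ x, MM3 n w x := by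
  set q := a + 3 * b with hq
  set x : Word := fun i => if i = q then w (q + 2) else if i = q + 1 then om
    else if i = q + 2 then om else w i with hxdef
  have hx0 : x q = w (q + 2) := by simp [hxdef]
  have hx1 : x (q + 1) = om := by simp [hxdef]
  have hx2 : x (q + 2) = om := by simp [hxdef]
  have hxel : ∀ i, i ≠ q → i ≠ q + 1 → i ≠ q + 2 → x i = w i := by
    intro i h h' h''; simp [hxdef, h, h', h'']
  refine ⟨x, hv, valid3_build ?_ ?_, ?_⟩
  · intro i hi; rw [hxel i (by omega) (by omega) (by omega)]; exact hv.1 i hi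
  · intro i hi hiz
    have hmain : i < q ∨ i = q ∨ i = q + 1 ∨ i = q + 2 ∨ q + 3 ≤ i := by omega
    rcases hmain with h | rfl | rfl | rfl | h
    · refine prefix_valid (fun i hi => by
          rw [hxel i (by omega) (by omega) (by omega)]; exact h1 i hi)
        (fun t ht => ?_) (by rw [hx0]; exact g2) (by omega) i h hiz
      rw [hxel _ (by omega) (by omega) (by omega), hxel _ (by omega) (by omega) (by omega),
        hxel _ (by omega) (by omega) (by omega)]
      exact h2 t ht
    · rw [hx0]
      rw [valid_ex hv (show q + 2 < n by omega) g2]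
      refine (ex_shift (show q ≤ q + 2 by omega)
        (fun l hl => hxel l (by omega) (by omega) (by omega))
        (fun l hl1 hl2 => ?_) (by omega)).symm
      have : l = q + 1 ∨ l = q + 2 := by omega
      rcases this with rfl | rfl
      · exact hx1
      · exact hx2
    · rw [hx1] at hiz; exact absurd rfl hiz
    · rw [hx2] at hiz; exact absurd rfl hiz
    · exact valid_tail_iff hv hi (fun l hl => hxel l (by omega) (by omega) (by omega)) hiz
  · exact ⟨q, ⟨a, b, hq, h1, h2⟩, Or.inl ⟨hn, g0, g1, g2, hx0, hx1, hx2,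
      fun i hi1 hi2 hi3 => hxel i hi1 hi2 hi3⟩⟩

/-- Case B1 gap ≥ 3: `w = … 0^1 1 1 1 …`; target of pattern (a). -/
lemma matched_A2 {j : ℕ} (hv : Valid3 n w)
    (h1 : ∀ i, i < a → w i = om)
    (h2 : ∀ t, t < b → w (a + 3 * t) = zm ∧ w (a + 3 * t + 1) = zx ∧ w (a + 3 * t + 2) = om)
    (g0 : w (a + 3 * b) = z1)
    (hj1 : a + 3 * b + 3 < j) (hj2 : j < n) (hj3 : isZ (w j))
    (hj4 : ∀ l, a + 3 * b < l → l < j → w l = om) (hj5 : Odd (j - (a + 3 * b) - 1)) :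
    ∃ z, MM3 n z w := by
  set q := a + 3 * b with hq
  set z : Word := fun i => if i = q + 2 then z1 else w i with hzdef
  have hz2 : z (q + 2) = z1 := by simp [hzdef]
  have hzel : ∀ i, i ≠ q + 2 → z i = w i := by intro i h; simp [hzdef, h]
  refine ⟨z, valid3_build ?_ ?_, hv, ?_⟩
  · intro i hi; rw [hzel i (by omega)]; exact hv.1 i hi
  · intro i hi hiz
    have hmain : i < q ∨ i = q ∨ i = q + 1 ∨ i = q + 2 ∨ q + 3 ≤ i := by omega
    rcases hmain with h | rfl | rfl | rfl | h
    · refine prefix_valid (fun i hi => by rw [hzel i (by omega)]; exact h1 i hi)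
        (fun t ht => ?_) (by rw [hzel q (by omega), g0]; simp [isZ]) (by omega) i h hiz
      rw [hzel _ (by omega), hzel _ (by omega), hzel _ (by omega)]
      exact h2 t ht
    · rw [hzel q (by omega), g0,
        ex_first (n := n) (show q < q + 2 by omega)
          (fun l hl1 hl2 => by
            have : l = q + 1 := by omega
            rw [this, hzel _ (by omega)]; exact hj4 _ (by omega) (by omega))
          (by rw [hz2]; simp [isZ]) (by omega)]
      simp [Nat.odd_iff]
    · rw [hzel _ (by omega)] at hiz
      exact absurd (hj4 _ (by omega) (by omega)) hiz
    · rw [hz2]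
      refine iff_of_true (Or.inr rfl) ⟨j, by omega, hj2, by rw [hzel j (by omega)]; exact hj3,
        fun l hl1 hl2 => by rw [hzel l (by omega)]; exact hj4 l (by omega) hl2, ?_⟩
      rw [Nat.odd_iff] at hj5 ⊢; omega
    · exact valid_tail_iff hv hi (fun l hl => hzel l (by omega)) hiz
  · refine ⟨q, ⟨a, b, hq, fun i hi => by rw [hzel i (by omega)]; exact h1 i hi,
      fun t ht => ?_⟩, Or.inl ?_⟩
    · rw [hzel _ (by omega), hzel _ (by omega), hzel _ (by omega)]
      exact h2 t ht
    · refine ⟨by omega, by rw [hzel q (by omega)]; exact g0,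
        by rw [hzel _ (by omega)]; exact hj4 _ (by omega) (by omega),
        by rw [hz2]; simp [isZ], by rw [hz2]; exact g0,
        hj4 _ (by omega) (by omega), hj4 _ (by omega) (by omega),
        fun i hi1 hi2 hi3 => (hzel i hi3).symm⟩

/-- Case B2 gap 1: `w = … 0^x 1 0^s …`; target of pattern (c). -/
lemma matched_C1 (hv : Valid3 n w)
    (h1 : ∀ i, i < a → w i = om)
    (h2 : ∀ t, t < b → w (a + 3 * t) = zm ∧ w (a + 3 * t + 1) = zx ∧ w (a + 3 * t + 2) = om)
    (g0 : w (a + 3 * b) = zx) (g1 : w (a + 3 * b + 1) = om)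
    (g2 : isZ (w (a + 3 * b + 2))) (hn : a + 3 * b + 2 < n) :
    ∃ z, MM3 n z w := by
  set q := a + 3 * b with hq
  set z : Word := fun i => if i = q then zm else if i = q + 1 then zm else w i with hzdef
  have hz0 : z q = zm := by simp [hzdef]
  have hz1 : z (q + 1) = zm := by simp [hzdef]
  have hzel : ∀ i, i ≠ q → i ≠ q + 1 → z i = w i := by intro i h h'; simp [hzdef, h, h']
  refine ⟨z, valid3_build ?_ ?_, hv, ?_⟩
  · intro i hi; rw [hzel i (by omega) (by omega)]; exact hv.1 i hi
  · intro i hi hiz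
    have hmain : i < q ∨ i = q ∨ i = q + 1 ∨ q + 2 ≤ i := by omega
    rcases hmain with h | rfl | rfl | h
    · refine prefix_valid (fun i hi => by rw [hzel i (by omega) (by omega)]; exact h1 i hi)
        (fun t ht => ?_) (by rw [hz0]; simp [isZ]) (by omega) i h hiz
      rw [hzel _ (by omega) (by omega), hzel _ (by omega) (by omega),
        hzel _ (by omega) (by omega)]
      exact h2 t ht
    · rw [hz0, ex_first (n := n) (show q < q + 1 by omega)
        (fun l hl1 hl2 => absurd hl1 (by omega)) (by rw [hz1]; simp [isZ]) (by omega)]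
      simp [Nat.odd_iff]
    · rw [hz1, ex_first (n := n) (show q + 1 < q + 2 by omega)
        (fun l hl1 hl2 => absurd hl1 (by omega))
        (by rw [hzel _ (by omega) (by omega)]; exact g2) (by omega)]
      simp [Nat.odd_iff]
    · exact valid_tail_iff hv hi (fun l hl => hzel l (by omega) (by omega)) hiz
  · refine ⟨q, ⟨a, b, hq, fun i hi => by rw [hzel i (by omega) (by omega)]; exact h1 i hi,
      fun t ht => ?_⟩, Or.inr (Or.inr ?_)⟩
    · rw [hzel _ (by omega) (by omega), hzel _ (by omega) (by omega),
        hzel _ (by omega) (by omega)]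
      exact h2 t ht
    · exact ⟨hn, hz0, hz1, by rw [hzel _ (by omega) (by omega)]; exact g2, g0, g1,
        fun i hi1 hi2 => (hzel i hi1 hi2).symm⟩

/-- Case B2 gap ≥ 3: `w = … 0^x 1 1 1 …`; target of pattern (a). -/
lemma matched_C2 {j : ℕ} (hv : Valid3 n w)
    (h1 : ∀ i, i < a → w i = om)
    (h2 : ∀ t, t < b → w (a + 3 * t) = zm ∧ w (a + 3 * t + 1) = zx ∧ w (a + 3 * t + 2) = om)
    (g0 : w (a + 3 * b) = zx)
    (hj1 : a + 3 * b + 3 < j) (hj2 : j < n) (hj3 : isZ (w j))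
    (hj4 : ∀ l, a + 3 * b < l → l < j → w l = om) (hj5 : Odd (j - (a + 3 * b) - 1)) :
    ∃ z, MM3 n z w := by
  set q := a + 3 * b with hq
  set z : Word := fun i => if i = q then z1 else if i = q + 2 then zx else w i with hzdef
  have hz0 : z q = z1 := by simp [hzdef]
  have hz2 : z (q + 2) = zx := by simp [hzdef]
  have hzel : ∀ i, i ≠ q → i ≠ q + 2 → z i = w i := by intro i h h'; simp [hzdef, h, h']
  refine ⟨z, valid3_build ?_ ?_, hv, ?_⟩
  · intro i hi; rw [hzel i (by omega) (by omega)]; exact hv.1 i hi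
  · intro i hi hiz
    have hmain : i < q ∨ i = q ∨ i = q + 1 ∨ i = q + 2 ∨ q + 3 ≤ i := by omega
    rcases hmain with h | rfl | rfl | rfl | h
    · refine prefix_valid (fun i hi => by rw [hzel i (by omega) (by omega)]; exact h1 i hi)
        (fun t ht => ?_) (by rw [hz0]; simp [isZ]) (by omega) i h hiz
      rw [hzel _ (by omega) (by omega), hzel _ (by omega) (by omega),
        hzel _ (by omega) (by omega)]
      exact h2 t ht
    · rw [hz0, ex_first (n := n) (show q < q + 2 by omega)
        (fun l hl1 hl2 => by
          have : l = q + 1 := by omega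
          rw [this, hzel _ (by omega) (by omega)]; exact hj4 _ (by omega) (by omega))
        (by rw [hz2]; simp [isZ]) (by omega)]
      simp [Nat.odd_iff]
    · rw [hzel _ (by omega) (by omega)] at hiz
      exact absurd (hj4 _ (by omega) (by omega)) hiz
    · rw [hz2]
      refine iff_of_true (Or.inl rfl) ⟨j, by omega, hj2, by rw [hzel j (by omega) (by omega)]; exact hj3,
        fun l hl1 hl2 => by rw [hzel l (by omega) (by omega)]; exact hj4 l (by omega) hl2, ?_⟩
      rw [Nat.odd_iff] at hj5 ⊢; omega
    · exact valid_tail_iff hv hi (fun l hl => hzel l (by omega) (by omega)) hiz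
  · refine ⟨q, ⟨a, b, hq, fun i hi => by rw [hzel i (by omega) (by omega)]; exact h1 i hi,
      fun t ht => ?_⟩, Or.inl ?_⟩
    · rw [hzel _ (by omega) (by omega), hzel _ (by omega) (by omega),
        hzel _ (by omega) (by omega)]
      exact h2 t ht
    · refine ⟨by omega, hz0, by rw [hzel _ (by omega) (by omega)]; exact hj4 _ (by omega) (by omega),
        by rw [hz2]; simp [isZ], by rw [hz2]; exact g0,
        hj4 _ (by omega) (by omega), hj4 _ (by omega) (by omega),
        fun i hi1 hi2 hi3 => (hzel i hi1 hi3).symm⟩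


/-- `w = … 0 0^1 1 0^s …` (gap 1): source of pattern (b). -/
lemma matched_D1 (hv : Valid3 n w)
    (h1 : ∀ i, i < a → w i = om)
    (h2 : ∀ t, t < b → w (a + 3 * t) = zm ∧ w (a + 3 * t + 1) = zx ∧ w (a + 3 * t + 2) = om)
    (g0 : w (a + 3 * b) = zm) (g1 : w (a + 3 * b + 1) = z1) (g2 : w (a + 3 * b + 2) = om)
    (g3 : isZ (w (a + 3 * b + 3))) (hn : a + 3 * b + 3 < n) :
    ∃ x, MM3 n w x := by
  set q := a + 3 * b with hq
  set x : Word := fun i => if i = q + 1 then w (q + 3) else if i = q + 2 then om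
    else if i = q + 3 then om else w i with hxdef
  have hx1 : x (q + 1) = w (q + 3) := by simp [hxdef]
  have hx2 : x (q + 2) = om := by simp [hxdef]
  have hx3 : x (q + 3) = om := by simp [hxdef]
  have hxel : ∀ i, i ≠ q + 1 → i ≠ q + 2 → i ≠ q + 3 → x i = w i := by
    intro i h h' h''; simp [hxdef, h, h', h'']
  refine ⟨x, hv, valid3_build ?_ ?_, ?_⟩
  · intro i hi; rw [hxel i (by omega) (by omega) (by omega)]; exact hv.1 i hi
  · intro i hi hiz
    have hmain : i < q ∨ i = q ∨ i = q + 1 ∨ i = q + 2 ∨ i = q + 3 ∨ q + 4 ≤ i := by omega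
    rcases hmain with h | rfl | rfl | rfl | rfl | h
    · refine prefix_valid (fun i hi => by
          rw [hxel i (by omega) (by omega) (by omega)]; exact h1 i hi)
        (fun t ht => ?_) (by rw [hxel q (by omega) (by omega) (by omega), g0]; simp [isZ])
        (by omega) i h hiz
      rw [hxel _ (by omega) (by omega) (by omega), hxel _ (by omega) (by omega) (by omega),
        hxel _ (by omega) (by omega) (by omega)]
      exact h2 t ht
    · rw [hxel q (by omega) (by omega) (by omega), g0,
        ex_first (n := n) (show q < q + 1 by omega)
          (fun l hl1 hl2 => absurd hl1 (by omega)) (by rw [hx1]; exact g3) (by omega)]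
      simp [Nat.odd_iff]
    · rw [hx1, valid_ex hv (show q + 3 < n by omega) g3]
      refine (ex_shift (show q + 1 ≤ q + 3 by omega)
        (fun l hl => hxel l (by omega) (by omega) (by omega))
        (fun l hl1 hl2 => ?_) (by omega)).symm
      have : l = q + 2 ∨ l = q + 3 := by omega
      rcases this with rfl | rfl
      · exact hx2
      · exact hx3
    · rw [hx2] at hiz; exact absurd rfl hiz
    · rw [hx3] at hiz; exact absurd rfl hiz
    · exact valid_tail_iff hv hi (fun l hl => hxel l (by omega) (by omega) (by omega)) hiz
  · exact ⟨q, ⟨a, b, hq, h1, h2⟩, Or.inr (Or.inl ⟨hn, g0, g1, g2, g3, hx1, hx2, hx3,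
      fun i hi1 hi2 hi3 => hxel i hi1 hi2 hi3⟩)⟩

/-- `w = … 0 0^1 1 1 1 …` (gap ≥ 3): target of pattern (b). -/
lemma matched_D2 {j : ℕ} (hv : Valid3 n w)
    (h1 : ∀ i, i < a → w i = om)
    (h2 : ∀ t, t < b → w (a + 3 * t) = zm ∧ w (a + 3 * t + 1) = zx ∧ w (a + 3 * t + 2) = om)
    (g0 : w (a + 3 * b) = zm) (g1 : w (a + 3 * b + 1) = z1)
    (hj1 : a + 3 * b + 4 < j) (hj2 : j < n) (hj3 : isZ (w j))
    (hj4 : ∀ l, a + 3 * b + 1 < l → l < j → w l = om) (hj5 : Odd (j - (a + 3 * b) - 2)) :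
    ∃ z, MM3 n z w := by
  set q := a + 3 * b with hq
  set z : Word := fun i => if i = q + 3 then z1 else w i with hzdef
  have hz3 : z (q + 3) = z1 := by simp [hzdef]
  have hzel : ∀ i, i ≠ q + 3 → z i = w i := by intro i h; simp [hzdef, h]
  refine ⟨z, valid3_build ?_ ?_, hv, ?_⟩
  · intro i hi; rw [hzel i (by omega)]; exact hv.1 i hi
  · intro i hi hiz
    have hmain : i < q ∨ i = q ∨ i = q + 1 ∨ i = q + 2 ∨ i = q + 3 ∨ q + 4 ≤ i := by omega
    rcases hmain with h | rfl | rfl | rfl | rfl | h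
    · refine prefix_valid (fun i hi => by rw [hzel i (by omega)]; exact h1 i hi)
        (fun t ht => ?_) (by rw [hzel q (by omega), g0]; simp [isZ]) (by omega) i h hiz
      rw [hzel _ (by omega), hzel _ (by omega), hzel _ (by omega)]
      exact h2 t ht
    · rw [hzel q (by omega), g0,
        ex_first (n := n) (show q < q + 1 by omega)
          (fun l hl1 hl2 => absurd hl1 (by omega))
          (by rw [hzel _ (by omega), g1]; simp [isZ]) (by omega)]
      simp [Nat.odd_iff]
    · rw [hzel _ (by omega), g1,
        ex_first (n := n) (show q + 1 < q + 3 by omega)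
          (fun l hl1 hl2 => by
            have : l = q + 2 := by omega
            rw [this, hzel _ (by omega)]; exact hj4 _ (by omega) (by omega))
          (by rw [hz3]; simp [isZ]) (by omega)]
      simp [Nat.odd_iff]
    · rw [hzel _ (by omega)] at hiz
      exact absurd (hj4 _ (by omega) (by omega)) hiz
    · rw [hz3]
      refine iff_of_true (Or.inr rfl) ⟨j, by omega, hj2, by rw [hzel j (by omega)]; exact hj3,
        fun l hl1 hl2 => by rw [hzel l (by omega)]; exact hj4 l (by omega) hl2, ?_⟩
      rw [Nat.odd_iff] at hj5 ⊢; omega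
    · exact valid_tail_iff hv hi (fun l hl => hzel l (by omega)) hiz
  · refine ⟨q, ⟨a, b, hq, fun i hi => by rw [hzel i (by omega)]; exact h1 i hi,
      fun t ht => ?_⟩, Or.inr (Or.inl ?_)⟩
    · rw [hzel _ (by omega), hzel _ (by omega), hzel _ (by omega)]
      exact h2 t ht
    · refine ⟨by omega, by rw [hzel q (by omega)]; exact g0,
        by rw [hzel _ (by omega)]; exact g1,
        by rw [hzel _ (by omega)]; exact hj4 _ (by omega) (by omega),
        by rw [hz3]; simp [isZ], by rw [hz3]; exact g1,
        hj4 _ (by omega) (by omega), hj4 _ (by omega) (by omega),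
        fun i hi1 hi2 hi3 => (hzel i hi3).symm⟩

/-- `w = … 0 0 0^s …`: source of pattern (c). -/
lemma matched_E (hv : Valid3 n w)
    (h1 : ∀ i, i < a → w i = om)
    (h2 : ∀ t, t < b → w (a + 3 * t) = zm ∧ w (a + 3 * t + 1) = zx ∧ w (a + 3 * t + 2) = om)
    (g0 : w (a + 3 * b) = zm) (g1 : w (a + 3 * b + 1) = zm)
    (g2 : isZ (w (a + 3 * b + 2))) (hn : a + 3 * b + 2 < n) :
    ∃ x, MM3 n w x := by
  set q := a + 3 * b with hq
  set x : Word := fun i => if i = q then zx else if i = q + 1 then om else w i with hxdef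
  have hx0 : x q = zx := by simp [hxdef]
  have hx1 : x (q + 1) = om := by simp [hxdef]
  have hxel : ∀ i, i ≠ q → i ≠ q + 1 → x i = w i := by intro i h h'; simp [hxdef, h, h']
  refine ⟨x, hv, valid3_build ?_ ?_, ?_⟩
  · intro i hi; rw [hxel i (by omega) (by omega)]; exact hv.1 i hi
  · intro i hi hiz
    have hmain : i < q ∨ i = q ∨ i = q + 1 ∨ q + 2 ≤ i := by omega
    rcases hmain with h | rfl | rfl | h
    · refine prefix_valid (fun i hi => by rw [hxel i (by omega) (by omega)]; exact h1 i hi)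
        (fun t ht => ?_) (by rw [hx0]; simp [isZ]) (by omega) i h hiz
      rw [hxel _ (by omega) (by omega), hxel _ (by omega) (by omega),
        hxel _ (by omega) (by omega)]
      exact h2 t ht
    · rw [hx0, ex_first (n := n) (show q < q + 2 by omega)
        (fun l hl1 hl2 => by
          have : l = q + 1 := by omega
          rw [this]; exact hx1)
        (by rw [hxel _ (by omega) (by omega)]; exact g2) (by omega)]
      simp [Nat.odd_iff]
    · rw [hx1] at hiz; exact absurd rfl hiz
    · exact valid_tail_iff hv hi (fun l hl => hxel l (by omega) (by omega)) hiz
  · exact ⟨q, ⟨a, b, hq, h1, h2⟩, Or.inr (Or.inr ⟨hn, g0, g1, g2, hx0, hx1,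
      fun i hi1 hi2 => hxel i hi1 hi2⟩)⟩

/-- `w = … 0 0 1 1 …` with no odd-gapped zero after the second `0`: target of pattern (b). -/
lemma matched_F (hv : Valid3 n w)
    (h1 : ∀ i, i < a → w i = om)
    (h2 : ∀ t, t < b → w (a + 3 * t) = zm ∧ w (a + 3 * t + 1) = zx ∧ w (a + 3 * t + 2) = om)
    (g0 : w (a + 3 * b) = zm) (g1 : w (a + 3 * b + 1) = zm) (g2 : w (a + 3 * b + 2) = om)
    (g3 : w (a + 3 * b + 3) = om) (hn : a + 3 * b + 3 < n) :
    ∃ z, MM3 n z w := by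
  set q := a + 3 * b with hq
  have hnex1 : ¬ Ex n w (q + 1) := valid_zm_not_ex hv (by omega) g1
  set z : Word := fun i => if i = q + 1 then z1 else if i = q + 3 then zm else w i with hzdef
  have hz1 : z (q + 1) = z1 := by simp [hzdef]
  have hz3 : z (q + 3) = zm := by simp [hzdef]
  have hzel : ∀ i, i ≠ q + 1 → i ≠ q + 3 → z i = w i := by intro i h h'; simp [hzdef, h, h']
  refine ⟨z, valid3_build ?_ ?_, hv, ?_⟩
  · intro i hi; rw [hzel i (by omega) (by omega)]; exact hv.1 i hi
  · intro i hi hiz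
    have hmain : i < q ∨ i = q ∨ i = q + 1 ∨ i = q + 2 ∨ i = q + 3 ∨ q + 4 ≤ i := by omega
    rcases hmain with h | rfl | rfl | rfl | rfl | h
    · refine prefix_valid (fun i hi => by rw [hzel i (by omega) (by omega)]; exact h1 i hi)
        (fun t ht => ?_) (by rw [hzel q (by omega) (by omega), g0]; simp [isZ]) (by omega) i h hiz
      rw [hzel _ (by omega) (by omega), hzel _ (by omega) (by omega),
        hzel _ (by omega) (by omega)]
      exact h2 t ht
    · rw [hzel q (by omega) (by omega), g0,
        ex_first (n := n) (show q < q + 1 by omega)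
          (fun l hl1 hl2 => absurd hl1 (by omega)) (by rw [hz1]; simp [isZ]) (by omega)]
      simp [Nat.odd_iff]
    · rw [hz1, ex_first (n := n) (show q + 1 < q + 3 by omega)
        (fun l hl1 hl2 => by
          have : l = q + 2 := by omega
          rw [this, hzel _ (by omega) (by omega)]; exact g2)
        (by rw [hz3]; simp [isZ]) (by omega)]
      simp [Nat.odd_iff]
    · rw [hzel _ (by omega) (by omega)] at hiz; exact absurd g2 hiz
    · rw [hz3]
      have e2 : Ex n z (q + 3) ↔ Ex n w (q + 3) :=
        ex_shift (le_refl (q + 3)) (fun l hl => hzel l (by omega) (by omega))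
          (fun l hl1 hl2 => absurd (hl1.trans_le hl2) (lt_irrefl _)) (by simp)
      have e3 : Ex n w (q + 1) ↔ Ex n w (q + 3) :=
        ex_shift (show q + 1 ≤ q + 3 by omega) (fun l hl => rfl)
          (fun l hl1 hl2 => by
            have : l = q + 2 ∨ l = q + 3 := by omega
            rcases this with rfl | rfl
            · exact g2
            · exact g3) (by omega)
      rw [e2, ← e3]
      exact iff_of_false (by simp) hnex1
    · exact valid_tail_iff hv hi (fun l hl => hzel l (by omega) (by omega)) hiz
  · refine ⟨q, ⟨a, b, hq, fun i hi => by rw [hzel i (by omega) (by omega)]; exact h1 i hi,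
      fun t ht => ?_⟩, Or.inr (Or.inl ?_)⟩
    · rw [hzel _ (by omega) (by omega), hzel _ (by omega) (by omega),
        hzel _ (by omega) (by omega)]
      exact h2 t ht
    · refine ⟨by omega, by rw [hzel q (by omega) (by omega)]; exact g0, hz1,
        by rw [hzel _ (by omega) (by omega)]; exact g2,
        by rw [hz3]; simp [isZ], by rw [hz3]; exact g1, g2, g3,
        fun i hi1 hi2 hi3 => (hzel i hi1 hi3).symm⟩

/-- `w = … 0 1 1 …` with no odd-gapped zero after the `0`: target of pattern (a). -/
lemma matched_G (hv : Valid3 n w)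
    (h1 : ∀ i, i < a → w i = om)
    (h2 : ∀ t, t < b → w (a + 3 * t) = zm ∧ w (a + 3 * t + 1) = zx ∧ w (a + 3 * t + 2) = om)
    (g0 : w (a + 3 * b) = zm) (g1 : w (a + 3 * b + 1) = om) (g2 : w (a + 3 * b + 2) = om)
    (hn : a + 3 * b + 2 < n) :
    ∃ z, MM3 n z w := by
  set q := a + 3 * b with hq
  have hnex : ¬ Ex n w q := valid_zm_not_ex hv (by omega) g0
  set z : Word := fun i => if i = q then z1 else if i = q + 2 then zm else w i with hzdef
  have hz0 : z q = z1 := by simp [hzdef]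
  have hz2 : z (q + 2) = zm := by simp [hzdef]
  have hzel : ∀ i, i ≠ q → i ≠ q + 2 → z i = w i := by intro i h h'; simp [hzdef, h, h']
  refine ⟨z, valid3_build ?_ ?_, hv, ?_⟩
  · intro i hi; rw [hzel i (by omega) (by omega)]; exact hv.1 i hi
  · intro i hi hiz
    have hmain : i < q ∨ i = q ∨ i = q + 1 ∨ i = q + 2 ∨ q + 3 ≤ i := by omega
    rcases hmain with h | rfl | rfl | rfl | h
    · refine prefix_valid (fun i hi => by rw [hzel i (by omega) (by omega)]; exact h1 i hi)
        (fun t ht => ?_) (by rw [hz0]; simp [isZ]) (by omega) i h hiz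
      rw [hzel _ (by omega) (by omega), hzel _ (by omega) (by omega),
        hzel _ (by omega) (by omega)]
      exact h2 t ht
    · rw [hz0, ex_first (n := n) (show q < q + 2 by omega)
        (fun l hl1 hl2 => by
          have : l = q + 1 := by omega
          rw [this, hzel _ (by omega) (by omega)]; exact g1)
        (by rw [hz2]; simp [isZ]) (by omega)]
      simp [Nat.odd_iff]
    · rw [hzel _ (by omega) (by omega)] at hiz; exact absurd g1 hiz
    · rw [hz2]
      have e2 : Ex n z (q + 2) ↔ Ex n w (q + 2) :=
        ex_shift (le_refl (q + 2)) (fun l hl => hzel l (by omega) (by omega))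
          (fun l hl1 hl2 => absurd (hl1.trans_le hl2) (lt_irrefl _)) (by simp)
      have e3 : Ex n w q ↔ Ex n w (q + 2) :=
        ex_shift (show q ≤ q + 2 by omega) (fun l hl => rfl)
          (fun l hl1 hl2 => by
            have : l = q + 1 ∨ l = q + 2 := by omega
            rcases this with rfl | rfl
            · exact g1
            · exact g2) (by omega)
      rw [e2, ← e3]
      exact iff_of_false (by simp) hnex
    · exact valid_tail_iff hv hi (fun l hl => hzel l (by omega) (by omega)) hiz
  · refine ⟨q, ⟨a, b, hq, fun i hi => by rw [hzel i (by omega) (by omega)]; exact h1 i hi,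
      fun t ht => ?_⟩, Or.inl ?_⟩
    · rw [hzel _ (by omega) (by omega), hzel _ (by omega) (by omega),
        hzel _ (by omega) (by omega)]
      exact h2 t ht
    · refine ⟨by omega, hz0, by rw [hzel _ (by omega) (by omega)]; exact g1,
        by rw [hz2]; simp [isZ], by rw [hz2]; exact g0, g1, g2,
        fun i hi1 hi2 hi3 => (hzel i hi1 hi3).symm⟩


/-- Every valid word that is not of one of the five shapes is matched by `M`. -/
lemma matched_of_not_shape {n : ℕ} {w : Word} (hv : Valid3 n w) (hs : ¬ Shape5 n w) :
    (∃ x, MM3 n w x) ∨ (∃ z, MM3 n z w) := by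
  classical
  have h0 : Prefix3 w 0 :=
    ⟨0, 0, by simp, fun i hi => absurd hi (by omega), fun t ht => absurd ht (by omega)⟩
  obtain ⟨a, b, hp, h1, h2⟩ : Prefix3 w (Nat.findGreatest (Prefix3 w) n) :=
    Nat.findGreatest_spec (Nat.zero_le n) h0
  have hple : Nat.findGreatest (Prefix3 w) n ≤ n := Nat.findGreatest_le n
  have hmax : ∀ m, a + 3 * b < m → m ≤ n → ¬ Prefix3 w m := by
    rw [← hp]; exact fun m hm1 hm2 => Nat.findGreatest_is_greatest hm1 hm2
  rw [hp] at hple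
  rcases eq_or_lt_of_le hple with hpe | hplt
  · exact absurd ⟨a + 3 * b, ⟨a, b, rfl, h1, h2⟩, Or.inr (Or.inr (Or.inr (Or.inr hpe)))⟩ hs
  cases hwp : w (a + 3 * b) with
  | zx =>
    obtain ⟨j, hj1, hj2, hj3, hj4, hj5⟩ := valid_ex_of hv hplt (Or.inl hwp)
    have hodd := hj5; rw [Nat.odd_iff] at hodd
    rcases (by omega : j = a + 3 * b + 2 ∨ a + 3 * b + 3 < j) with rfl | hj
    · exact Or.inr (matched_C1 hv h1 h2 hwp (hj4 _ (by omega) (by omega)) hj3 hj2)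
    · exact Or.inr (matched_C2 hv h1 h2 hwp hj hj2 hj3 hj4 hj5)
  | z1 =>
    obtain ⟨j, hj1, hj2, hj3, hj4, hj5⟩ := valid_ex_of hv hplt (Or.inr hwp)
    have hodd := hj5; rw [Nat.odd_iff] at hodd
    rcases (by omega : j = a + 3 * b + 2 ∨ a + 3 * b + 3 < j) with rfl | hj
    · exact Or.inl (matched_A1 hv h1 h2 hwp (hj4 _ (by omega) (by omega)) hj3 hj2)
    · exact Or.inr (matched_A2 hv h1 h2 hwp hj hj2 hj3 hj4 hj5)
  | zm =>
    have hnex : ¬ Ex n w (a + 3 * b) := valid_zm_not_ex hv hplt hwp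
    rcases eq_or_lt_of_le (show a + 3 * b + 1 ≤ n by omega) with h1n | h1n
    · exact absurd ⟨a + 3 * b, ⟨a, b, rfl, h1, h2⟩, Or.inl ⟨h1n, hwp⟩⟩ hs
    cases hwp1 : w (a + 3 * b + 1) with
    | zx =>
      obtain ⟨j, hj1, hj2, hj3, hj4, hj5⟩ := valid_ex_of hv h1n (Or.inl hwp1)
      have hodd := hj5; rw [Nat.odd_iff] at hodd
      refine absurd (?_ : Prefix3 w (a + 3 * b + 3)) (hmax _ (by omega) (by omega))
      refine ⟨a, b + 1, by ring, h1, fun t ht => ?_⟩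
      rcases (by omega : t < b ∨ t = b) with ht' | rfl
      · exact h2 t ht'
      · exact ⟨hwp, hwp1, hj4 _ (by omega) (by omega)⟩
    | z1 =>
      obtain ⟨j, hj1, hj2, hj3, hj4, hj5⟩ := valid_ex_of hv h1n (Or.inr hwp1)
      have hodd := hj5; rw [Nat.odd_iff] at hodd
      rcases (by omega : j = a + 3 * b + 3 ∨ a + 3 * b + 4 < j) with rfl | hj
      · exact Or.inl (matched_D1 hv h1 h2 hwp hwp1 (hj4 _ (by omega) (by omega)) hj3 hj2)
      · exact Or.inr (matched_D2 hv h1 h2 hwp hwp1 hj hj2 hj3 hj4 hj5)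
    | zm =>
      have hnex1 : ¬ Ex n w (a + 3 * b + 1) := valid_zm_not_ex hv h1n hwp1
      rcases eq_or_lt_of_le (show a + 3 * b + 2 ≤ n by omega) with h2n | h2n
      · exact absurd ⟨a + 3 * b, ⟨a, b, rfl, h1, h2⟩,
          Or.inr (Or.inr (Or.inr (Or.inl ⟨h2n, hwp, hwp1⟩)))⟩ hs
      cases hwp2 : w (a + 3 * b + 2) with
      | zx => exact Or.inl (matched_E hv h1 h2 hwp hwp1 (by simp [isZ, hwp2]) h2n)
      | z1 => exact Or.inl (matched_E hv h1 h2 hwp hwp1 (by simp [isZ, hwp2]) h2n)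
      | zm => exact Or.inl (matched_E hv h1 h2 hwp hwp1 (by simp [isZ, hwp2]) h2n)
      | om =>
        rcases eq_or_lt_of_le (show a + 3 * b + 3 ≤ n by omega) with h3n | h3n
        · exact absurd ⟨a + 3 * b, ⟨a, b, rfl, h1, h2⟩,
            Or.inr (Or.inr (Or.inl ⟨h3n, hwp, hwp1, hwp2⟩))⟩ hs
        have hwp3 : w (a + 3 * b + 3) = om := by
          by_contra h
          refine hnex1 ⟨a + 3 * b + 3, by omega, h3n, h, fun l hl1 hl2 => ?_, by simp [Nat.odd_iff]⟩
          have : l = a + 3 * b + 2 := by omega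
          rw [this]; exact hwp2
        exact Or.inr (matched_F hv h1 h2 hwp hwp1 hwp2 hwp3 h3n)
    | om =>
      rcases eq_or_lt_of_le (show a + 3 * b + 2 ≤ n by omega) with h2n | h2n
      · exact absurd ⟨a + 3 * b, ⟨a, b, rfl, h1, h2⟩,
          Or.inr (Or.inl ⟨h2n, hwp, hwp1⟩)⟩ hs
      have hwp2 : w (a + 3 * b + 2) = om := by
        by_contra h
        refine hnex ⟨a + 3 * b + 2, by omega, h2n, h, fun l hl1 hl2 => ?_, by simp [Nat.odd_iff]⟩
        have : l = a + 3 * b + 1 := by omega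
        rw [this]; exact hwp1
      exact Or.inr (matched_G hv h1 h2 hwp hwp1 hwp2 h2n)
  | om =>
    rcases Nat.eq_zero_or_pos b with rfl | hb
    · refine absurd (?_ : Prefix3 w (a + 1)) (hmax _ (by omega) (by omega))
      refine ⟨a + 1, 0, by ring, fun i hi => ?_, fun t ht => absurd ht (by omega)⟩
      rcases (by omega : i < a ∨ i = a) with h | rfl
      · exact h1 i h
      · simpa using hwp
    · obtain ⟨b', rfl⟩ : ∃ b', b = b' + 1 := ⟨b - 1, by omega⟩
      have e : a + 3 * (b' + 1) = a + 3 * b' + 3 := by ring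
      rw [e] at hwp hplt
      exact Or.inr (matched_B0 hv h1 h2 hplt hwp)

end Constructions



section Part1

open Sym

lemma prefix_transfer {z w : Word} {p' : ℕ} (hpre : Prefix3 z p')
    (heq : ∀ i, i < p' → w i = z i) : Prefix3 w p' := by
  obtain ⟨a', b', rfl, h1', h2'⟩ := hpre
  refine ⟨a', b', rfl, fun i hi => (heq i (by omega)).trans (h1' i hi), fun t ht => ?_⟩
  rw [heq _ (by omega), heq _ (by omega), heq _ (by omega)]
  exact h2' t ht

lemma no_z1 {n a b : ℕ} {w : Word} (hv : Valid3 n w)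
    (h1 : ∀ i, i < a → w i = om)
    (h2 : ∀ t, t < b → w (a + 3 * t) = zm ∧ w (a + 3 * t + 1) = zx ∧ w (a + 3 * t + 2) = om)
    (hsuf : ∀ i, a + 3 * b ≤ i → i < n → w i = om ∨ w i = zm) : ∀ i, w i ≠ z1 := by
  intro i hi
  rcases lt_or_ge i n with hn | hn
  · rcases lt_or_ge i a with h | h
    · rw [h1 i h] at hi; exact absurd hi (by simp)
    · rcases lt_or_ge i (a + 3 * b) with h' | h'
      · obtain ⟨t, ht, hcase⟩ : ∃ t, t < b ∧ (i = a + 3 * t ∨ i = a + 3 * t + 1 ∨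
            i = a + 3 * t + 2) := ⟨(i - a) / 3, by omega, by omega⟩
        obtain ⟨g0, g1, g2⟩ := h2 _ ht
        rcases hcase with rfl | rfl | rfl
        · rw [g0] at hi; exact absurd hi (by simp)
        · rw [g1] at hi; exact absurd hi (by simp)
        · rw [g2] at hi; exact absurd hi (by simp)
      · rcases hsuf i h' hn with h'' | h'' <;> (rw [h''] at hi; exact absurd hi (by simp))
  · rw [hv.1 i hn] at hi; exact absurd hi (by simp)

/-- Generic criterion for being critical. -/
lemma critical_of_facts {n a b : ℕ} {w : Word} (hv : Valid3 n w)
    (h1 : ∀ i, i < a → w i = om)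
    (h2 : ∀ t, t < b → w (a + 3 * t) = zm ∧ w (a + 3 * t + 1) = zx ∧ w (a + 3 * t + 2) = om)
    (hq0 : w (a + 3 * b) = zm)
    (hq1 : w (a + 3 * b + 1) ≠ zx)
    (hnz1 : ∀ i, w i ≠ z1)
    (hsc : ¬(w (a + 3 * b + 1) = zm ∧ isZ (w (a + 3 * b + 2)) ∧ a + 3 * b + 2 < n))
    (hta : ¬(w (a + 3 * b + 1) = om ∧ a + 3 * b + 2 < n))
    (htb : ¬(isZ (w (a + 3 * b + 1)) ∧ a + 3 * b + 3 < n)) :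
    Critical3 n w := by
  have hqa : w a = zm := by
    rcases Nat.eq_zero_or_pos b with rfl | hb
    · simpa using hq0
    · simpa using (h2 0 hb).1
  have cls : ∀ p', Prefix3 w p' → p' < a ∨ ∃ b', b' ≤ b ∧ p' = a + 3 * b' := by
    rintro p' ⟨a', b', rfl, h1', h2'⟩
    rcases Nat.eq_zero_or_pos b' with rfl | hb'
    · rcases lt_or_ge a' a with h | h
      · exact Or.inl (by omega)
      · rcases eq_or_lt_of_le h with rfl | h'
        · exact Or.inr ⟨0, by omega, by omega⟩
        · exact absurd (h1' a (by omega)) (by simp [hqa])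
    · have ha' : w a' = zm := by simpa using (h2' 0 hb').1
      have haa : a' = a := by
        rcases lt_trichotomy a' a with h | h | h
        · exact absurd (h1 a' h) (by simp [ha'])
        · exact h
        · exact absurd (h1' a (by omega)) (by simp [hqa])
      subst haa
      have hbb : b' ≤ b := by
        by_contra h
        exact hq1 (h2' b (by omega)).2.1
      exact Or.inr ⟨b', hbb, rfl⟩
  have groupzm : ∀ b', b' ≤ b → w (a + 3 * b') = zm := by
    intro b' hb'
    rcases eq_or_lt_of_le hb' with rfl | h
    · exact hq0
    · exact (h2 b' h).1
  refine ⟨hv, ?_, ?_⟩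
  · rintro x ⟨_, _, p', hpre, pat⟩
    rcases pat with ⟨_, hz1', _⟩ | ⟨_, _, hz1', _⟩ | ⟨hlt, hp0, hp1, hp2, _⟩
    · exact hnz1 p' hz1'
    · exact hnz1 (p' + 1) hz1'
    · rcases cls p' hpre with h | ⟨b', hb', rfl⟩
      · exact absurd hp0 (by simp [h1 p' h])
      · rcases eq_or_lt_of_le hb' with rfl | h
        · exact hsc ⟨hp1, hp2, hlt⟩
        · exact absurd hp1 (by simp [(h2 b' h).2.1])
  · rintro z ⟨hvz, _, p', hpre, pat⟩
    rcases pat with ⟨hlt, hz0, hz1', hz2, hx0, hx1, hx2, heq⟩ |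
      ⟨hlt, hz0, hz1', hz2, hz3, hx1, hx2, hx3, heq⟩ | ⟨hlt, hz0, hz1', hz2, hx0, hx1, heq⟩
    · -- target of pattern (a)
      have hprew := prefix_transfer hpre (fun i hi => heq i (by omega) (by omega) (by omega))
      have hwz : isZ (w p') := hx0 ▸ hz2
      rcases cls p' hprew with h | ⟨b', hb', rfl⟩
      · exact hwz (h1 p' h)
      · rcases eq_or_lt_of_le hb' with rfl | h
        · exact hta ⟨hx1, hlt⟩
        · exact absurd hx1 (by simp [(h2 b' h).2.1])
    · -- target of pattern (b)
      have hprew := prefix_transfer hpre (fun i hi => heq i (by omega) (by omega) (by omega))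
      have hw1 : isZ (w (p' + 1)) := hx1 ▸ hz3
      rcases cls p' hprew with h | ⟨b', hb', rfl⟩
      · have hwq : w p' = zm := (heq p' (by omega) (by omega) (by omega)).trans hz0
        exact absurd hwq (by simp [h1 p' h])
      · rcases eq_or_lt_of_le hb' with rfl | h
        · exact htb ⟨hw1, hlt⟩
        · have hg : w (a + 3 * (b' + 1)) = zm := groupzm (b' + 1) (by omega)
          rw [show a + 3 * (b' + 1) = a + 3 * b' + 3 by ring] at hg
          exact absurd hx3 (by simp [hg])
    · -- target of pattern (c)
      have hprew := prefix_transfer hpre (fun i hi => heq i (by omega) (by omega))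
      rcases cls p' hprew with h | ⟨b', hb', rfl⟩
      · exact absurd hx0 (by simp [h1 p' h])
      · exact absurd hx0 (by simp [groupzm b' hb'])

/-- The all-ones word. -/
lemma allom_of {n a b : ℕ} {w : Word} (hv : Valid3 n w)
    (h1 : ∀ i, i < a → w i = om)
    (h2 : ∀ t, t < b → w (a + 3 * t) = zm ∧ w (a + 3 * t + 1) = zx ∧ w (a + 3 * t + 2) = om)
    (hpn : a + 3 * b = n) : ∀ i, w i = om := by
  have hb0 : b = 0 := by
    rcases b with _ | b''
    · rfl
    exfalso
    obtain ⟨j, hj1, hj2, hj3, hj4, hj5⟩ := valid_ex_of hv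
      (show a + 3 * b'' + 1 < n by omega) (Or.inl (h2 b'' (by omega)).2.1)
    have : j = a + 3 * b'' + 2 := by omega
    subst this
    exact hj3 (h2 b'' (by omega)).2.2
  subst hb0
  intro i
  rcases lt_or_ge i n with h | h
  · exact h1 i (by omega)
  · exact hv.1 i h

lemma crit_allom {n : ℕ} {w : Word} (hv : Valid3 n w) (hall : ∀ i, w i = om) :
    Critical3 n w := by
  refine ⟨hv, ?_, ?_⟩
  · rintro x ⟨_, _, p', _, pat⟩
    rcases pat with ⟨_, hz, _⟩ | ⟨_, _, hz, _⟩ | ⟨_, hz, _⟩ <;>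
      (rw [hall _] at hz; exact absurd hz (by simp))
  · rintro z ⟨_, _, p', _, pat⟩
    rcases pat with ⟨_, _, _, hz2, hx0, _⟩ | ⟨_, _, _, _, hz3, hx1, _⟩ | ⟨_, _, _, _, hx0, _⟩
    · exact (hx0 ▸ hz2) (hall p')
    · exact (hx1 ▸ hz3) (hall (p' + 1))
    · rw [hall p'] at hx0; exact absurd hx0 (by simp)

lemma crit_of_shape {n : ℕ} {w : Word} (hv : Valid3 n w) (hs : Shape5 n w) :
    Critical3 n w := by
  obtain ⟨p, ⟨a, b, rfl, h1, h2⟩, hform⟩ := hs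
  rcases hform with ⟨hn, hw0⟩ | ⟨hn, hw0, hw1⟩ | ⟨hn, hw0, hw1, hw2⟩ | ⟨hn, hw0, hw1⟩ | hn
  · -- `… 0`
    have hp1 : w (a + 3 * b + 1) = om := hv.1 _ (by omega)
    refine critical_of_facts hv h1 h2 hw0 (by simp [hp1]) (no_z1 hv h1 h2 ?_) ?_ ?_ ?_
    · intro i hi1 hi2
      have : i = a + 3 * b := by omega
      rw [this]; exact Or.inr hw0
    · rintro ⟨h, _⟩; rw [hp1] at h; exact absurd h (by simp)
    · rintro ⟨_, h⟩; omega
    · rintro ⟨_, h⟩; omega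
  · -- `… 01`
    refine critical_of_facts hv h1 h2 hw0 (by simp [hw1]) (no_z1 hv h1 h2 ?_) ?_ ?_ ?_
    · intro i hi1 hi2
      have : i = a + 3 * b ∨ i = a + 3 * b + 1 := by omega
      rcases this with rfl | rfl
      · exact Or.inr hw0
      · exact Or.inl hw1
    · rintro ⟨h, _⟩; rw [hw1] at h; exact absurd h (by simp)
    · rintro ⟨_, h⟩; omega
    · rintro ⟨h, _⟩; exact h hw1
  · -- `… 001`
    refine critical_of_facts hv h1 h2 hw0 (by simp [hw1]) (no_z1 hv h1 h2 ?_) ?_ ?_ ?_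
    · intro i hi1 hi2
      have : i = a + 3 * b ∨ i = a + 3 * b + 1 ∨ i = a + 3 * b + 2 := by omega
      rcases this with rfl | rfl | rfl
      · exact Or.inr hw0
      · exact Or.inr hw1
      · exact Or.inl hw2
    · rintro ⟨_, h, _⟩; exact h hw2
    · rintro ⟨h, _⟩; rw [hw1] at h; exact absurd h (by simp)
    · rintro ⟨_, h⟩; omega
  · -- `… 00`
    refine critical_of_facts hv h1 h2 hw0 (by simp [hw1]) (no_z1 hv h1 h2 ?_) ?_ ?_ ?_
    · intro i hi1 hi2
      have : i = a + 3 * b ∨ i = a + 3 * b + 1 := by omega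
      rcases this with rfl | rfl
      · exact Or.inr hw0
      · exact Or.inr hw1
    · rintro ⟨_, _, h⟩; omega
    · rintro ⟨h, _⟩; rw [hw1] at h; exact absurd h (by simp)
    · rintro ⟨_, h⟩; omega
  · -- `1…1`
    exact crit_allom hv (allom_of hv h1 h2 hn)

end Part1


section Part2

open Sym

lemma count_prefix {w : Word} {a : ℕ} (b : ℕ)
    (h1 : ∀ i, i < a → w i = om)
    (h2 : ∀ t, t < b → w (a + 3 * t) = zm ∧ w (a + 3 * t + 1) = zx ∧ w (a + 3 * t + 2) = om) :
    ((Finset.range (a + 3 * b)).filter (fun i => w i = om)).card = a + b := by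
  induction b with
  | zero =>
    rw [Finset.filter_true_of_mem (fun x hx => h1 x (by simp at hx; omega))]
    simp
  | succ b ih =>
    obtain ⟨g0, g1, g2⟩ := h2 b (by omega)
    have e : a + 3 * (b + 1) = a + 3 * b + 2 + 1 := by ring
    rw [e, Finset.range_add_one, Finset.filter_insert, if_pos g2,
      Finset.card_insert_of_notMem (by simp),
      show a + 3 * b + 2 = a + 3 * b + 1 + 1 from rfl, Finset.range_add_one,
      Finset.filter_insert, if_neg (by simp [g1]),
      show a + 3 * b + 1 = a + 3 * b + 1 from rfl, Finset.range_add_one,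
      Finset.filter_insert, if_neg (by simp [g0]),
      ih (fun t ht => h2 t (by omega))]
    omega

/-- Suffix length of the canonical critical word of degree `t` and last letter `L`. -/
def lenf (t : ℤ) (L : Sym) : ℕ :=
  if t = 0 then 0
  else if t % 2 = 0 then (if L = zm then 2 else 3)
  else (if L = zm then 1 else 2)

/-- Number of `00^x1` groups of the canonical critical word of degree `t`. -/
def bf (t : ℤ) : ℕ :=
  if t % 2 = 0 then ((-t).toNat - 2) / 2 else ((-t).toNat - 1) / 2

/-- The canonical critical word of length `n`, degree `t`, last letter `L`. -/
def F (n : ℕ) (t : ℤ) (L : Sym) : Word := fun i =>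
  if n ≤ i then om
  else if i + 1 = n then L
  else if i < n - lenf t L - 3 * bf t then om
  else if i < n - lenf t L then
    (if (i - (n - lenf t L - 3 * bf t)) % 3 = 0 then zm
     else if (i - (n - lenf t L - 3 * bf t)) % 3 = 1 then zx else om)
  else zm

lemma shape_det {n : ℕ} {w : Word} (hv : Valid3 n w) (hs : Shape5 n w) :
    ∀ i, w i = F n (hdeg3 n w) (w (n - 1)) i := by
  obtain ⟨p, ⟨a, b, rfl, h1, h2⟩, hform⟩ := hs
  have hgen : ∀ i, (∀ j, n ≤ j → w j = om) → ¬ (n ≤ i) → i + 1 ≠ n →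
      n - lenf (hdeg3 n w) (w (n-1)) - 3 * bf (hdeg3 n w) = a →
      n - lenf (hdeg3 n w) (w (n-1)) = a + 3 * b →
      (a + 3 * b ≤ i → i + 1 < n → w i = zm) →
      w i = F n (hdeg3 n w) (w (n - 1)) i := by
    intro i hpad hin hlast ha hq hsuf
    simp only [F, if_neg hin, if_neg hlast]
    rw [ha, hq]
    rcases lt_or_ge i a with h | h
    · rw [if_pos h]; exact h1 i h
    · rcases lt_or_ge i (a + 3 * b) with h' | h'
      · rw [if_neg (by omega), if_pos h']
        obtain ⟨t, ht, hcase⟩ : ∃ t, t < b ∧ (i = a + 3 * t ∨ i = a + 3 * t + 1 ∨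
            i = a + 3 * t + 2) := ⟨(i - a) / 3, by omega, by omega⟩
        obtain ⟨g0, g1, g2⟩ := h2 t ht
        rcases hcase with rfl | rfl | rfl
        · rw [if_pos (by omega)]; exact g0
        · rw [if_neg (by omega), if_pos (by omega)]; exact g1
        · rw [if_neg (by omega), if_neg (by omega)]; exact g2
      · rw [if_neg (by omega), if_neg (by omega)]
        exact hsuf h' (by omega)
  rcases hform with ⟨hn, hw0⟩ | ⟨hn, hw0, hw1⟩ | ⟨hn, hw0, hw1, hw2⟩ | ⟨hn, hw0, hw1⟩ | hn
  · -- `… 0`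
    have hcount : ((Finset.range n).filter (fun i => w i = om)).card = a + b := by
      rw [← hn, Finset.range_add_one, Finset.filter_insert, if_neg (by simp [hw0])]
      exact count_prefix b h1 h2
    have hdeg : hdeg3 n w = -(2 * (b : ℤ) + 1) := by
      simp only [hdeg3]; rw [hcount, ← hn]; push_cast; ring
    have hL : w (n - 1) = zm := by rw [show n - 1 = a + 3 * b by omega]; exact hw0
    have hlen : lenf (hdeg3 n w) (w (n - 1)) = 1 := by
      rw [hdeg, hL, lenf, if_neg (by omega), if_neg (by omega), if_pos rfl]
    have hbf : bf (hdeg3 n w) = b := by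
      rw [hdeg, bf, if_neg (by omega)]; omega
    intro i
    by_cases hin : n ≤ i
    · simp only [F, if_pos hin]; exact hv.1 i hin
    by_cases hlast : i + 1 = n
    · simp only [F, if_neg hin, if_pos hlast]
      rw [show i = n - 1 by omega]
    exact hgen i hv.1 hin hlast (by rw [hlen, hbf]; omega) (by rw [hlen]; omega)
      (fun h h' => by omega)
  · -- `… 01`
    have hcount : ((Finset.range n).filter (fun i => w i = om)).card = a + b + 1 := by
      rw [← hn, show a + 3 * b + 2 = a + 3 * b + 1 + 1 from rfl, Finset.range_add_one,
        Finset.filter_insert, if_pos hw1, Finset.card_insert_of_notMem (by simp),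
        Finset.range_add_one, Finset.filter_insert, if_neg (by simp [hw0]), count_prefix b h1 h2]
    have hdeg : hdeg3 n w = -(2 * (b : ℤ) + 1) := by
      simp only [hdeg3]; rw [hcount, ← hn]; push_cast; ring
    have hL : w (n - 1) = om := by rw [show n - 1 = a + 3 * b + 1 by omega]; exact hw1
    have hlen : lenf (hdeg3 n w) (w (n - 1)) = 2 := by
      rw [hdeg, hL, lenf, if_neg (by omega), if_neg (by omega), if_neg (by simp)]
    have hbf : bf (hdeg3 n w) = b := by
      rw [hdeg, bf, if_neg (by omega)]; omega
    intro i
    by_cases hin : n ≤ i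
    · simp only [F, if_pos hin]; exact hv.1 i hin
    by_cases hlast : i + 1 = n
    · simp only [F, if_neg hin, if_pos hlast]
      rw [show i = n - 1 by omega]
    refine hgen i hv.1 hin hlast (by rw [hlen, hbf]; omega) (by rw [hlen]; omega)
      (fun h h' => ?_)
    rw [show i = a + 3 * b by omega]; exact hw0
  · -- `… 001`
    have hcount : ((Finset.range n).filter (fun i => w i = om)).card = a + b + 1 := by
      rw [← hn, show a + 3 * b + 3 = a + 3 * b + 2 + 1 from rfl, Finset.range_add_one,
        Finset.filter_insert, if_pos hw2, Finset.card_insert_of_notMem (by simp),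
        show a + 3 * b + 2 = a + 3 * b + 1 + 1 from rfl, Finset.range_add_one,
        Finset.filter_insert, if_neg (by simp [hw1]),
        Finset.range_add_one, Finset.filter_insert, if_neg (by simp [hw0]), count_prefix b h1 h2]
    have hdeg : hdeg3 n w = -(2 * (b : ℤ) + 2) := by
      simp only [hdeg3]; rw [hcount, ← hn]; push_cast; ring
    have hL : w (n - 1) = om := by rw [show n - 1 = a + 3 * b + 2 by omega]; exact hw2
    have hlen : lenf (hdeg3 n w) (w (n - 1)) = 3 := by
      rw [hdeg, hL, lenf, if_neg (by omega), if_pos (by omega), if_neg (by simp)]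
    have hbf : bf (hdeg3 n w) = b := by
      rw [hdeg, bf, if_pos (by omega)]; omega
    intro i
    by_cases hin : n ≤ i
    · simp only [F, if_pos hin]; exact hv.1 i hin
    by_cases hlast : i + 1 = n
    · simp only [F, if_neg hin, if_pos hlast]
      rw [show i = n - 1 by omega]
    refine hgen i hv.1 hin hlast (by rw [hlen, hbf]; omega) (by rw [hlen]; omega)
      (fun h h' => ?_)
    have : i = a + 3 * b ∨ i = a + 3 * b + 1 := by omega
    rcases this with rfl | rfl
    · exact hw0
    · exact hw1
  · -- `… 00`
    have hcount : ((Finset.range n).filter (fun i => w i = om)).card = a + b := by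
      rw [← hn, show a + 3 * b + 2 = a + 3 * b + 1 + 1 from rfl, Finset.range_add_one,
        Finset.filter_insert, if_neg (by simp [hw1]),
        Finset.range_add_one, Finset.filter_insert, if_neg (by simp [hw0]), count_prefix b h1 h2]
    have hdeg : hdeg3 n w = -(2 * (b : ℤ) + 2) := by
      simp only [hdeg3]; rw [hcount, ← hn]; push_cast; ring
    have hL : w (n - 1) = zm := by rw [show n - 1 = a + 3 * b + 1 by omega]; exact hw1
    have hlen : lenf (hdeg3 n w) (w (n - 1)) = 2 := by
      rw [hdeg, hL, lenf, if_neg (by omega), if_pos (by omega), if_pos rfl]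
    have hbf : bf (hdeg3 n w) = b := by
      rw [hdeg, bf, if_pos (by omega)]; omega
    intro i
    by_cases hin : n ≤ i
    · simp only [F, if_pos hin]; exact hv.1 i hin
    by_cases hlast : i + 1 = n
    · simp only [F, if_neg hin, if_pos hlast]
      rw [show i = n - 1 by omega]
    refine hgen i hv.1 hin hlast (by rw [hlen, hbf]; omega) (by rw [hlen]; omega)
      (fun h h' => ?_)
    rw [show i = a + 3 * b by omega]; exact hw0
  · -- `1…1`
    have hall := allom_of hv h1 h2 hn
    have hcount : ((Finset.range n).filter (fun i => w i = om)).card = n := by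
      rw [Finset.filter_true_of_mem (fun x _ => hall x), Finset.card_range]
    have hdeg : hdeg3 n w = 0 := by simp [hdeg3, hcount]
    intro i
    by_cases hin : n ≤ i
    · simp only [F, if_pos hin]; exact hall i
    by_cases hlast : i + 1 = n
    · simp only [F, if_neg hin, if_pos hlast]
      rw [show i = n - 1 by omega]
    have hlen : lenf (hdeg3 n w) (w (n - 1)) = 0 := by rw [hdeg, lenf, if_pos rfl]
    have hbf : bf (hdeg3 n w) = 0 := by rw [hdeg]; simp [bf]
    simp only [F, if_neg hin, if_neg hlast, hlen, hbf]
    rw [if_pos (by omega)]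
    exact hall i

lemma shape_last {n : ℕ} {w : Word} (hv : Valid3 n w) (hs : Shape5 n w) :
    w (n - 1) = zm ∨ w (n - 1) = om := by
  obtain ⟨p, ⟨a, b, rfl, h1, h2⟩, hform⟩ := hs
  rcases hform with ⟨hn, hw0⟩ | ⟨hn, hw0, hw1⟩ | ⟨hn, hw0, hw1, hw2⟩ | ⟨hn, hw0, hw1⟩ | hn
  · left; rw [show n - 1 = a + 3 * b by omega]; exact hw0
  · right; rw [show n - 1 = a + 3 * b + 1 by omega]; exact hw1
  · right; rw [show n - 1 = a + 3 * b + 2 by omega]; exact hw2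
  · left; rw [show n - 1 = a + 3 * b + 1 by omega]; exact hw1
  · right; exact allom_of hv h1 h2 hn (n - 1)

lemma shape_of_crit {n : ℕ} {w : Word} (hc : Critical3 n w) : Shape5 n w := by
  by_contra h
  rcases matched_of_not_shape hc.1 h with ⟨x, hx⟩ | ⟨z, hz⟩
  · exact hc.2.1 x hx
  · exact hc.2.2 z hz

lemma crit_unique {n : ℕ} {w1 w2 : Word} (hc1 : Critical3 n w1) (hc2 : Critical3 n w2)
    (ht : hdeg3 n w1 = hdeg3 n w2) (hL : w1 (n - 1) = om ↔ w2 (n - 1) = om) : w1 = w2 := by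
  have hs1 := shape_of_crit hc1
  have hs2 := shape_of_crit hc2
  have hLL : w1 (n - 1) = w2 (n - 1) := by
    rcases shape_last hc1.1 hs1 with h1 | h1 <;> rcases shape_last hc2.1 hs2 with h2 | h2 <;>
      simp [h1, h2] at hL ⊢
  funext i
  rw [shape_det hc1.1 hs1 i, shape_det hc2.1 hs2 i, ht, hLL]

end Part2

theorem stmt14 (k : ℕ) :
    (∀ w, Valid3 (2 * k) w → (Critical3 (2 * k) w ↔ Shape5 (2 * k) w)) ∧
    ∀ t : ℤ, Nat.card {w : Word // Critical3 (2 * k) w ∧ hdeg3 (2 * k) w = t} ≤ 2 := by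
  constructor
  · intro w hv
    exact ⟨shape_of_crit, crit_of_shape hv⟩
  · intro t
    have hinj : Function.Injective
        (fun x : {w : Word // Critical3 (2 * k) w ∧ hdeg3 (2 * k) w = t} =>
          decide (x.1 (2 * k - 1) = Sym.om)) := by
      rintro ⟨w1, hc1, ht1⟩ ⟨w2, hc2, ht2⟩ h
      simp only [decide_eq_decide] at h
      exact Subtype.ext (crit_unique hc1 hc2 (ht1.trans ht2.symm) h)
    calc Nat.card {w : Word // Critical3 (2 * k) w ∧ hdeg3 (2 * k) w = t}
        ≤ Nat.card Bool := Nat.card_le_card_of_injective _ hinj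
      _ = 2 := by simp [Nat.card_eq_fintype_card]

end Stmt14
end

section
/- Stable periodicity of 3-torus braid complexes (head): For all k ≥ 0 and all t ≥ −⌊4k/3⌋ there is an isomorphism of truncated complexes τ^{≥ −⌊4k/3⌋} M⟦(σ_1σ_2)^k⟧_Enh ≅ τ^{≥ −⌊4k/3⌋}(M⟦(σ_1σ_2)^{k+3}⟧_Enh {6}); equivalently there are chain-space isomorphisms ψ_t for t ≥ −⌊4k/3⌋ making the squares with the Morse differentials commute. -/
/-!
STATEMENT 15: Stable periodicity of 3-torus braid complexes (head):
`τ^{≥ -⌊4k/3⌋} M⟦(σ₁σ₂)^k⟧_Enh ≅ τ^{≥ -⌊4k/3⌋} (M⟦(σ₁σ₂)^{k+3}⟧_Enh {6})`.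

Combinatorial presentation of the Morse complexes via discrete Morse theory: chain spaces
are indexed by the critical enhanced words in each homological degree, differentials are
the signed sums over directed paths of `G(⟦(σ₁σ₂)^k⟧_Enh, M)`. The cells and matrix
elements of the delooped Khovanov complexes are abstract data over an additive category,
constrained by the Bar-Natan cube structure: matrix elements supported on the
combinatorial edge relation `E3`, matched arrows invertible, and invariance of cells and
matrix elements under prepending six `1`-smoothed crossings (adding a full twist
`(σ₁σ₂)³`). Conclusion: for every homological degree `t ≥ -⌊4k/3⌋` there is a bijection of
the critical cells and isomorphisms `ψ` of the corresponding cells commuting (entrywise)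
with the Morse differentials; internal grading shifts differ by exactly `6`.
-/

namespace Stmt15

/-- The symbols: `zx = 0^x`, `z1 = 0^1`, `zm = 0^-`, `om = 1^-`. -/
inductive Sym : Type
  | zx | z1 | zm | om
  deriving DecidableEq

open Sym

/-- Words are functions `ℕ → Sym`; a word of length `n` is padded with `om` beyond `n`. -/
abbrev Word : Type := ℕ → Sym

/-- A symbol is a zero-smoothing. -/
def isZ (s : Sym) : Prop := s ≠ om

/-- An enhanced word of length `n` for the 3-strand torus braid (with `n = 2k` for
`(σ₁σ₂)^k`): padded by `om` beyond `n`, and a `0` carries superscript `x` or `1` iff it is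
followed by an odd number of `1`'s and then a `0` (so that a circle is split there); all
other letters carry `-`. -/
def Valid3 (n : ℕ) (w : Word) : Prop :=
  (∀ i, n ≤ i → w i = om) ∧
  ∀ i < n, ((w i = zx ∨ w i = z1) ↔
    (isZ (w i) ∧ ∃ j, i < j ∧ j < n ∧ isZ (w j) ∧
      (∀ l, i < l → l < j → w l = om) ∧ Odd (j - i - 1)))

/-- The prefix pattern `1…1 (0 0^x 1)^b` of total length `p = a + 3b`. -/
def Prefix3 (z : Word) (p : ℕ) : Prop :=
  ∃ a b, p = a + 3 * b ∧ (∀ i, i < a → z i = om) ∧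
    ∀ t, t < b → z (a + 3 * t) = zm ∧ z (a + 3 * t + 1) = zx ∧ z (a + 3 * t + 2) = om

/-- The three matching patterns of the Morse matching for 3-torus braids, at position `p`
(after a prefix `1…1 (0 0^x 1)^*`):
`0^1 1 0^s ↗ 0^s 1 1`, `0 0^1 1 0^s ↗ 0 0^s 1 1`, and `0 0 0^s ↗ 0^x 1 0^s`. -/
def Mpat3 (n : ℕ) (z x : Word) : Prop :=
  ∃ p, Prefix3 z p ∧
    ( -- pattern (a): `z = … 0^1 1 0^s y`, `x = … 0^s 1 1 y`
      (p + 2 < n ∧ z p = z1 ∧ z (p + 1) = om ∧ isZ (z (p + 2)) ∧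
        x p = z (p + 2) ∧ x (p + 1) = om ∧ x (p + 2) = om ∧
        (∀ i, i ≠ p → i ≠ p + 1 → i ≠ p + 2 → x i = z i)) ∨
      -- pattern (b): `z = … 0 0^1 1 0^s y`, `x = … 0 0^s 1 1 y`
      (p + 3 < n ∧ z p = zm ∧ z (p + 1) = z1 ∧ z (p + 2) = om ∧ isZ (z (p + 3)) ∧
        x (p + 1) = z (p + 3) ∧ x (p + 2) = om ∧ x (p + 3) = om ∧
        (∀ i, i ≠ p + 1 → i ≠ p + 2 → i ≠ p + 3 → x i = z i)) ∨
      -- pattern (c): `z = … 0 0 0^s y`, `x = … 0^x 1 0^s y`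
      (p + 2 < n ∧ z p = zm ∧ z (p + 1) = zm ∧ isZ (z (p + 2)) ∧
        x p = zx ∧ x (p + 1) = om ∧
        (∀ i, i ≠ p → i ≠ p + 1 → x i = z i)))

/-- The Morse matching `M` on enhanced words of `(σ₁σ₂)^k` (with `n = 2k`). -/
def MM3 (n : ℕ) (z x : Word) : Prop := Valid3 n z ∧ Valid3 n x ∧ Mpat3 n z x

/-- A critical (unmatched) cell. -/
def Critical3 (n : ℕ) (w : Word) : Prop :=
  Valid3 n w ∧ (∀ x, ¬ MM3 n w x) ∧ (∀ z, ¬ MM3 n z w)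

/-- The homological degree of an enhanced word: (number of ones) − n. -/
def hdeg3 (n : ℕ) (w : Word) : ℤ :=
  (((Finset.range n).filter fun i => w i = om).card : ℤ) - n


/-- The nonzero matrix elements of the delooped Khovanov cube of `(σ₁σ₂)^k` (with
`n = 2k`) between enhanced words: `b` is obtained from `a` by changing one `0` (at index
`q`) into a `1`; circles of a smoothing occur between consecutive zeros separated by an
odd number of ones, and the matrix element is nonzero precisely in the following cases
(merges following the Frobenius rules `x·x = 0`, `x·1 = x`, `1·1 = 1`; a merge of a
labelled circle into the through-strands is the identity or a dotted identity; a split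
creates a circle labelled `x` (identity cobordism) or `1` (dotted cobordism)). -/
def E3 (n : ℕ) (a b : Word) : Prop :=
  Valid3 n a ∧ Valid3 n b ∧ ∃ q, q < n ∧ isZ (a q) ∧ b q = om ∧
    ( -- `q` is the first zero: either the circle `(q, next)` (if any) merges into the
      -- through-strands, or nothing happens to the circles; labels are unchanged
      ((∀ i, i < q → a i = om) ∧ (∀ i, i ≠ q → b i = a i)) ∨
      -- `q` has a previous zero `p`:
      (∃ p, p < q ∧ isZ (a p) ∧ (∀ i, p < i → i < q → a i = om) ∧
        ( -- no zero after `q`: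
          ((∀ i, q < i → a i = om) ∧
            ( -- circle `(p, q)` merges into the through-strands
              (Odd (q - p - 1) ∧ b p = zm ∧ (∀ i, i ≠ p → i ≠ q → b i = a i)) ∨
              -- no circle at `(p, q)`: labels unchanged
              (¬ Odd (q - p - 1) ∧ (∀ i, i ≠ q → b i = a i)))) ∨
          -- next zero at `j`:
          (∃ j, q < j ∧ j < n ∧ isZ (a j) ∧ (∀ i, q < i → i < j → a i = om) ∧
            ( -- both circles `(p, q)` and `(q, j)` exist: they merge, labels multiply
              (Odd (q - p - 1) ∧ Odd (j - q - 1) ∧ ¬(a p = zx ∧ a q = zx) ∧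
                ((a p = z1 ∧ a q = z1 ∧ b p = z1) ∨
                  (¬(a p = z1 ∧ a q = z1) ∧ b p = zx)) ∧
                (∀ i, i ≠ p → i ≠ q → b i = a i)) ∨
              -- only `(p, q)` is a circle: it merges into the through-strands
              (Odd (q - p - 1) ∧ ¬ Odd (j - q - 1) ∧ b p = zm ∧
                (∀ i, i ≠ p → i ≠ q → b i = a i)) ∨
              -- only `(q, j)` is a circle: it merges into the through-strands
              (¬ Odd (q - p - 1) ∧ Odd (j - q - 1) ∧ (∀ i, i ≠ q → b i = a i)) ∨
              -- no circle at `(p, q)` nor `(q, j)`: a circle `(p, j)` is split off,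
              -- labelled `x` or `1`
              (¬ Odd (q - p - 1) ∧ ¬ Odd (j - q - 1) ∧ (b p = zx ∨ b p = z1) ∧
                (∀ i, i ≠ p → i ≠ q → b i = a i)))))))

/-- Directed paths in `G(⟦(σ₁σ₂)^k⟧_Enh, M)`. -/
inductive GPath3 (n : ℕ) : Word → Word → Type
  | nil (a : Word) : GPath3 n a a
  | up {a b c : Word} (e : E3 n a b) (hne : ¬ MM3 n a b) (p : GPath3 n b c) : GPath3 n a c
  | down {a b c : Word} (e : MM3 n b a) (p : GPath3 n b c) : GPath3 n a c

/-- The number of reversed (matched) edges in a path. -/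
def downs3 {n : ℕ} : ∀ {a b : Word}, GPath3 n a b → ℕ
  | _, _, .nil _ => 0
  | _, _, .up _ _ p => downs3 p
  | _, _, .down _ p => downs3 p + 1

/-- The internal grading shift of the (delooped) cell of an enhanced word. -/
def qsh3 (n : ℕ) (w : Word) : ℤ :=
  (((Finset.range n).filter fun i => w i = om).card : ℤ) - 2 * n
    + (((Finset.range n).filter fun i => w i = z1).card : ℤ)
    - (((Finset.range n).filter fun i => w i = zx).card : ℤ)

/-- The critical cells of homological degree `t`. -/
def Crit3T (n : ℕ) (t : ℤ) : Type :=
  {w : Word // Critical3 n w ∧ hdeg3 n w = t}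

section Cat

open CategoryTheory

universe v u

variable {𝒞 : Type u} [Category.{v} 𝒞] [Preadditive 𝒞]

/-- The value of the remembering functor on a path. -/
def pathHom3 (cell : Word → 𝒞) (dv : ∀ a b : Word, (cell a ⟶ cell b))
    (gv : ∀ a b : Word, (cell b ⟶ cell a)) (n : ℕ) :
    ∀ {a b : Word}, GPath3 n a b → (cell a ⟶ cell b)
  | _, _, .nil a => 𝟙 (cell a)
  | _, _, .up (a := a) (b := b) _ _ p => dv a b ≫ pathHom3 cell dv gv n p
  | _, _, .down (a := a) (b := b) _ p => gv b a ≫ pathHom3 cell dv gv n p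

/-- A matrix element of the Morse differential. -/
noncomputable def mEntry3 (cell : Word → 𝒞) (dv : ∀ a b : Word, (cell a ⟶ cell b))
    (gv : ∀ a b : Word, (cell b ⟶ cell a)) (n : ℕ) (z x : Word) : (cell z ⟶ cell x) :=
  ∑ᶠ p : GPath3 n z x, ((-1 : ℤ) ^ downs3 p) • pathHom3 cell dv gv n p

end Cat


/-- Prepending six `1`-smoothed crossings (a full twist `(σ₁σ₂)³`) to an enhanced word. -/
def prep6 (w : Word) : Word := fun i => if i < 6 then om else w (i - 6)

/-!
Prepending six ones (a full twist) to an enhanced word preserves validity, the Morse matching and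
the edges of the cube, hence criticality, the directed paths of `G(⟦(σ₁σ₂)^k⟧_Enh, M)` and their
signs; since cells and matrix elements are invariant as well, the Morse differentials agree entrywise
on the image. It remains to see that the image contains every critical cell of degree
`t ≥ -⌊4k/3⌋`. A critical word is `1…1 (0 0^x 1)^b` followed by one of `0`, `0 1`, `0 0`, `0 0 1`
(otherwise one of the three matching patterns applies to it or produces it), and counting ones shows
that its leading run of ones has length `a` with `2a ≥ 2n + 3t - 1`; for `n = 2k + 6` this forces
`a ≥ 6`.
-/

@[simp] theorem isZ_zx : isZ zx := nofun
@[simp] theorem isZ_z1 : isZ z1 := nofun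
@[simp] theorem isZ_zm : isZ zm := nofun
@[simp] theorem not_isZ_om : ¬ isZ om := fun h => h rfl

theorem Mpat3.exists_agree {n : ℕ} {z x : Word} (h : Mpat3 n z x) :
    ∃ p, isZ (z p) ∧ isZ (x p) ∧ ∀ i < p, x i = z i := by
  obtain ⟨p, -, ⟨-, h0, -, h2, hx0, -, -, hrest⟩ | ⟨-, h0, -, -, -, -, -, -, hrest⟩ |
    ⟨-, h0, -, -, hx0, -, hrest⟩⟩ := h
  · exact ⟨p, by simp [h0], by rwa [hx0], fun i hi => hrest i (by omega) (by omega) (by omega)⟩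
  · exact ⟨p, by simp [h0], by rw [hrest p (by omega) (by omega) (by omega), h0]; simp,
      fun i hi => hrest i (by omega) (by omega) (by omega)⟩
  · exact ⟨p, by simp [h0], by simp [hx0], fun i hi => hrest i (by omega) (by omega)⟩

theorem E3.exists_agree {n : ℕ} {a b : Word} (h : E3 n a b) :
    ∃ p, isZ (a p) ∧ ∀ i < p, b i = a i := by
  obtain ⟨-, -, q, -, haq, -, ⟨-, hrest⟩ | ⟨p, hpq, hap, -, hcases⟩⟩ := h
  · exact ⟨q, haq, fun i hi => hrest i (by omega)⟩
  refine ⟨p, hap, fun i hi => ?_⟩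
  rcases hcases with ⟨-, ⟨-, -, hrest⟩ | ⟨-, hrest⟩⟩ |
    ⟨j, -, -, -, -, ⟨-, -, -, -, hrest⟩ | ⟨-, -, -, hrest⟩ | ⟨-, -, hrest⟩ | ⟨-, -, -, hrest⟩⟩
  all_goals first
    | exact hrest i (by omega) (by omega)
    | exact hrest i (by omega)

theorem forall_lt_eq_om_of_agree {m p : ℕ} {u w : Word} (hu : ∀ i < m, u i = om)
    (hp : isZ (u p)) (hagree : ∀ i < p, w i = u i) : ∀ i < m, w i = om := by
  have hmp : m ≤ p := by
    by_contra h
    exact hp (hu p (by omega))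
  exact fun i hi => (hagree i (by omega)).trans (hu i hi)

theorem forall_add_of_lt (m : ℕ) {Q : ℕ → Prop} (h : ∀ i < m, Q i) :
    (∀ i, Q i) ↔ ∀ j, Q (j + m) := by
  refine ⟨fun H j => H _, fun H i => ?_⟩
  rcases lt_or_ge i m with hi | hi
  · exact h i hi
  · simpa [Nat.sub_add_cancel hi] using H (i - m)

theorem exists_add_of_lt (m : ℕ) {Q : ℕ → Prop} (h : ∀ i < m, ¬ Q i) :
    (∃ i, Q i) ↔ ∃ j, Q (j + m) := by
  simpa using (forall_add_of_lt m (Q := fun i => ¬ Q i) h).not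

def prependOnes (m : ℕ) (w : Word) : Word := fun i => if i < m then om else w (i - m)

def dropFirst (m : ℕ) (w : Word) : Word := fun i => w (i + m)

section PrependOnes

variable {m n : ℕ}

theorem prependOnes_of_lt {w : Word} {i : ℕ} (h : i < m) : prependOnes m w i = om := if_pos h

@[simp] theorem prependOnes_add (w : Word) (i : ℕ) : prependOnes m w (i + m) = w i := by
  simp [prependOnes]

@[simp] theorem dropFirst_prependOnes (w : Word) : dropFirst m (prependOnes m w) = w :=
  funext fun i => prependOnes_add w i

theorem prependOnes_dropFirst {w : Word} (h : ∀ i < m, w i = om) :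
    prependOnes m (dropFirst m w) = w := by
  funext i
  rcases lt_or_ge i m with hi | hi
  · rw [prependOnes_of_lt hi, h i hi]
  · simp [prependOnes, dropFirst, Nat.not_lt.2 hi, Nat.sub_add_cancel hi]

theorem prependOnes_injective (m : ℕ) : Function.Injective (prependOnes m) := fun a b h => by
  rw [← dropFirst_prependOnes (m := m) a, h, dropFirst_prependOnes]

-- The quantifier shapes occurring in `Valid3`, `Mpat3` and `E3`, so that `simp` transports them.

section Quantifiers

variable {w a b : Word} {R S T Q : ℕ → Prop}

theorem forall_prependOnes_eq_om :
    (∀ i, R i → prependOnes m w i = om) ↔ ∀ j, R (j + m) → w j = om :=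
  forall_add_of_lt m (fun i hi _ => prependOnes_of_lt hi) |>.trans (by simp)

theorem forall_prependOnes_eq_om₂ :
    (∀ i, R i → S i → prependOnes m w i = om) ↔ ∀ j, R (j + m) → S (j + m) → w j = om :=
  forall_add_of_lt m (fun i hi _ _ => prependOnes_of_lt hi) |>.trans (by simp)

theorem forall_prependOnes_eq :
    (∀ i, R i → prependOnes m b i = prependOnes m a i) ↔ ∀ j, R (j + m) → b j = a j :=
  forall_add_of_lt m (fun i hi _ => by simp [prependOnes_of_lt hi]) |>.trans (by simp)

theorem forall_prependOnes_eq₂ :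
    (∀ i, R i → S i → prependOnes m b i = prependOnes m a i) ↔
      ∀ j, R (j + m) → S (j + m) → b j = a j :=
  forall_add_of_lt m (fun i hi _ _ => by simp [prependOnes_of_lt hi]) |>.trans (by simp)

theorem forall_prependOnes_eq₃ :
    (∀ i, R i → S i → T i → prependOnes m b i = prependOnes m a i) ↔
      ∀ j, R (j + m) → S (j + m) → T (j + m) → b j = a j :=
  forall_add_of_lt m (fun i hi _ _ _ => by simp [prependOnes_of_lt hi]) |>.trans (by simp)

theorem exists_isZ_prependOnes :
    (∃ i, R i ∧ isZ (prependOnes m w i) ∧ Q i) ↔ ∃ j, R (j + m) ∧ isZ (w j) ∧ Q (j + m) :=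
  exists_add_of_lt m (fun i hi => by simp [prependOnes_of_lt hi]) |>.trans (by simp)

theorem exists_isZ_prependOnes₂ :
    (∃ i, R i ∧ S i ∧ isZ (prependOnes m w i) ∧ Q i) ↔
      ∃ j, R (j + m) ∧ S (j + m) ∧ isZ (w j) ∧ Q (j + m) :=
  exists_add_of_lt m (fun i hi => by simp [prependOnes_of_lt hi]) |>.trans (by simp)

end Quantifiers

theorem valid3_prependOnes_iff {w : Word} : Valid3 (n + m) (prependOnes m w) ↔ Valid3 n w := by
  refine and_congr (forall_prependOnes_eq_om.trans (by simp))
    ((forall_add_of_lt m fun i hi => by simp [prependOnes_of_lt hi]).trans ?_)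
  simp only [prependOnes_add, exists_isZ_prependOnes₂, forall_prependOnes_eq_om₂,
    add_lt_add_iff_right, Nat.add_sub_add_right]

theorem prefix3_prependOnes_iff {z : Word} {p : ℕ} :
    Prefix3 (prependOnes m z) (p + m) ↔ Prefix3 z p := by
  constructor
  · rintro ⟨a, b, hab, hom, hblk⟩
    rcases Nat.eq_zero_or_pos b with rfl | hb
    · exact ⟨p, 0, rfl, fun i hi => by simpa using hom (i + m) (by omega), by simp⟩
    · have ha : m ≤ a := by
        by_contra h
        simpa [prependOnes_of_lt (show a < m by omega)] using (hblk 0 hb).1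
      obtain ⟨a, rfl⟩ := Nat.exists_eq_add_of_le' ha
      refine ⟨a, b, by omega, fun i hi => by simpa using hom (i + m) (by omega), fun t ht => ?_⟩
      simpa [add_right_comm _ m] using hblk t ht
  · rintro ⟨a, b, rfl, hom, hblk⟩
    refine ⟨a + m, b, by omega, fun i hi => ?_,
      fun t ht => by simpa [add_right_comm _ m] using hblk t ht⟩
    rcases lt_or_ge i m with h | h
    · exact prependOnes_of_lt h
    · obtain ⟨i, rfl⟩ := Nat.exists_eq_add_of_le' h
      simpa using hom i (by omega)

theorem mm3_prependOnes_iff {z x : Word} :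
    MM3 (n + m) (prependOnes m z) (prependOnes m x) ↔ MM3 n z x := by
  refine and_congr valid3_prependOnes_iff (and_congr valid3_prependOnes_iff ?_)
  unfold Mpat3
  rw [exists_add_of_lt m (fun p hp => by simp [prependOnes_of_lt hp])]
  simp only [prefix3_prependOnes_iff, prependOnes_add, forall_prependOnes_eq₂,
    forall_prependOnes_eq₃, add_right_comm _ m, add_lt_add_iff_right, ne_eq,
    Nat.add_right_cancel_iff]

theorem e3_prependOnes_iff {a b : Word} :
    E3 (n + m) (prependOnes m a) (prependOnes m b) ↔ E3 n a b := by
  simp only [E3, valid3_prependOnes_iff, prependOnes_add, exists_isZ_prependOnes,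
    exists_isZ_prependOnes₂, forall_prependOnes_eq_om, forall_prependOnes_eq_om₂,
    forall_prependOnes_eq, forall_prependOnes_eq₂, add_lt_add_iff_right, Nat.add_sub_add_right,
    ne_eq, Nat.add_right_cancel_iff]

theorem MM3.exists_eq_prependOnes_right {z : Word} {X : Word}
    (h : MM3 n (prependOnes m z) X) : ∃ x, X = prependOnes m x := by
  obtain ⟨p, hzp, -, hagree⟩ := h.2.2.exists_agree
  exact ⟨dropFirst m X, (prependOnes_dropFirst (forall_lt_eq_om_of_agree
    (fun i hi => prependOnes_of_lt hi) hzp hagree)).symm⟩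

theorem MM3.exists_eq_prependOnes_left {Z : Word} {x : Word}
    (h : MM3 n Z (prependOnes m x)) : ∃ z, Z = prependOnes m z := by
  obtain ⟨p, -, hxp, hagree⟩ := h.2.2.exists_agree
  exact ⟨dropFirst m Z, (prependOnes_dropFirst (forall_lt_eq_om_of_agree
    (fun i hi => prependOnes_of_lt hi) hxp fun i hi => (hagree i hi).symm)).symm⟩

theorem E3.exists_eq_prependOnes {a : Word} {B : Word}
    (h : E3 n (prependOnes m a) B) : ∃ b, B = prependOnes m b := by
  obtain ⟨p, hap, hagree⟩ := h.exists_agree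
  exact ⟨dropFirst m B, (prependOnes_dropFirst (forall_lt_eq_om_of_agree
    (fun i hi => prependOnes_of_lt hi) hap hagree)).symm⟩

theorem critical3_prependOnes_iff {w : Word} :
    Critical3 (n + m) (prependOnes m w) ↔ Critical3 n w := by
  refine and_congr valid3_prependOnes_iff (and_congr ⟨fun h x hx => ?_, fun h X hX => ?_⟩
    ⟨fun h z hz => ?_, fun h Z hZ => ?_⟩)
  · exact h _ (mm3_prependOnes_iff.2 hx)
  · obtain ⟨x, rfl⟩ := hX.exists_eq_prependOnes_right
    exact h x (mm3_prependOnes_iff.1 hX)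
  · exact h _ (mm3_prependOnes_iff.2 hz)
  · obtain ⟨z, rfl⟩ := hZ.exists_eq_prependOnes_left
    exact h z (mm3_prependOnes_iff.1 hZ)

theorem count_prependOnes (w : Word) (s : Sym) :
    Nat.count (fun i => prependOnes m w i = s) (n + m)
      = Nat.count (fun i => w i = s) n + if om = s then m else 0 := by
  rw [Nat.count_add']
  simp only [prependOnes_add]
  congr 1
  split_ifs with h
  · exact Nat.count_of_forall fun i hi => (prependOnes_of_lt hi).trans h
  · exact Nat.count_of_forall_not fun i hi => by rwa [prependOnes_of_lt hi]

theorem card_filter_eq_count (n : ℕ) (w : Word) (s : Sym) :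
    ((Finset.range n).filter fun i => w i = s).card = Nat.count (fun i => w i = s) n :=
  (Nat.count_eq_card_filter_range _ n).symm

theorem hdeg3_prependOnes (w : Word) : hdeg3 (n + m) (prependOnes m w) = hdeg3 n w := by
  simp only [hdeg3, card_filter_eq_count, count_prependOnes]
  push_cast
  ring

theorem qsh3_prependOnes (w : Word) : qsh3 (n + m) (prependOnes m w) + m = qsh3 n w := by
  simp only [qsh3, card_filter_eq_count, count_prependOnes, ↓reduceIte, Nat.cast_add,
    reduceCtorEq, add_zero]
  ring

end PrependOnes

def ValidAt (n : ℕ) (w : Word) (i : ℕ) : Prop :=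
  (w i = zx ∨ w i = z1) ↔ (isZ (w i) ∧ ∃ j, i < j ∧ j < n ∧ isZ (w j) ∧
    (∀ l, i < l → l < j → w l = om) ∧ Odd (j - i - 1))

def NextZero (w : Word) (i j : ℕ) : Prop :=
  i < j ∧ isZ (w j) ∧ ∀ l, i < l → l < j → w l = om

section Validity

variable {n : ℕ} {w u v : Word}

theorem eq_zm_of_isZ {s : Sym} (hz : isZ s) (hlab : ¬ (s = zx ∨ s = z1)) : s = zm := by
  cases s <;> simp_all

theorem validAt_of_eq_om {i : ℕ} (h : w i = om) : ValidAt n w i := by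
  simp [ValidAt, h]

theorem validAt_of_eq_zm {i : ℕ} (h : w i = zm)
    (hno : ∀ j, j < n → NextZero w i j → ¬ Odd (j - i - 1)) : ValidAt n w i := by
  refine ⟨fun hl => by simp [h] at hl, fun ⟨_, j, a1, a2, a3, a4, a5⟩ => ?_⟩
  exact absurd a5 (hno j a2 ⟨a1, a3, a4⟩)

theorem validAt_of_labelled {i j : ℕ} (hlab : w i = zx ∨ w i = z1) (hjn : j < n)
    (hj : NextZero w i j) (ho : Odd (j - i - 1)) : ValidAt n w i :=
  ⟨fun _ => ⟨by rcases hlab with h | h <;> simp [h], j, hj.1, hjn, hj.2.1, hj.2.2, ho⟩,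
    fun _ => hlab⟩

-- Moving a zero across ones to a position of the same parity keeps the parity of its gap.
theorem ValidAt.transport {s t m : ℕ} (hst : s % 2 = t % 2) (hsm : s ≤ m) (htm : t ≤ m)
    (hval : u s = v t) (hz : isZ (v t))
    (hu : ∀ l, s < l → l ≤ m → u l = om) (hvv : ∀ l, t < l → l ≤ m → v l = om)
    (hagree : ∀ l, m < l → u l = v l) (hcondv : ValidAt n v t) : ValidAt n u s := by
  unfold ValidAt at hcondv ⊢
  rw [hval]
  constructor
  · intro hl
    obtain ⟨-, j, a1, a2, a3, a4, a5⟩ := hcondv.mp hl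
    have hjm : m < j := by
      by_contra
      exact a3 (hvv j a1 (by omega))
    refine ⟨hz, j, by omega, a2, by rwa [hagree j hjm], fun l l1 l2 => ?_, ?_⟩
    · by_cases hlm : l ≤ m
      · exact hu l l1 hlm
      · rw [hagree l (by omega)]; exact a4 l (by omega) l2
    · rw [Nat.odd_iff] at a5 ⊢; omega
  · rintro ⟨-, j, a1, a2, a3, a4, a5⟩
    have hjm : m < j := by
      by_contra
      exact a3 (hu j a1 (by omega))
    refine hcondv.mpr ⟨hz, j, by omega, a2, by rwa [← hagree j hjm], fun l l1 l2 => ?_, ?_⟩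
    · by_cases hlm : l ≤ m
      · exact hvv l l1 hlm
      · rw [← hagree l (by omega)]; exact a4 l (by omega) l2
    · rw [Nat.odd_iff] at a5 ⊢; omega

theorem Prefix3.congr {p : ℕ} (hp : Prefix3 v p) (h : ∀ i < p, u i = v i) : Prefix3 u p := by
  obtain ⟨a, b, rfl, hom, hblk⟩ := hp
  refine ⟨a, b, rfl, fun i hi => (h i (by omega)).trans (hom i hi), fun t ht => ?_⟩
  rw [h _ (by omega), h _ (by omega), h _ (by omega)]
  exact hblk t ht

theorem Prefix3.validAt_of_lt {p : ℕ} (hpre : Prefix3 w p) (hp : isZ (w p)) (hpn : p < n) :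
    ∀ i < p, ValidAt n w i := by
  obtain ⟨a, b, rfl, hom, hblk⟩ := hpre
  intro i hi
  rcases lt_or_ge i a with hia | hia
  · exact validAt_of_eq_om (hom i hia)
  obtain ⟨t, r, htb, hr3, rfl⟩ : ∃ t r, t < b ∧ r < 3 ∧ i = a + 3 * t + r :=
    ⟨(i - a) / 3, (i - a) % 3, by omega, by omega, by omega⟩
  obtain ⟨h0, h1, h2⟩ := hblk t htb
  interval_cases r
  · refine validAt_of_eq_zm h0 fun j _ hj => ?_
    obtain rfl : j = a + 3 * t + 1 := by
      by_contra hne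
      have := hj.1
      exact absurd (hj.2.2 (a + 3 * t + 1) (by omega) (by omega)) (by rw [h1]; decide)
    simp
  · have hz : isZ (w (a + 3 * t + 1 + 2)) := by
      by_cases hlast : t + 1 < b
      · rw [show a + 3 * t + 1 + 2 = a + 3 * (t + 1) by omega, (hblk (t + 1) hlast).1]
        exact isZ_zm
      · rwa [show a + 3 * t + 1 + 2 = a + 3 * b by omega]
    refine validAt_of_labelled (Or.inl h1) (j := a + 3 * t + 1 + 2) (by omega)
      ⟨by omega, hz, fun l l1 l2 => by rwa [show l = a + 3 * t + 2 by omega]⟩ ?_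
    rw [show a + 3 * t + 1 + 2 - (a + 3 * t + 1) - 1 = 1 by omega]
    exact odd_one
  · exact validAt_of_eq_om h2

theorem validAt_congr {i : ℕ} (h : ∀ l, i ≤ l → u l = v l) : ValidAt n u i ↔ ValidAt n v i := by
  unfold ValidAt
  rw [h i le_rfl]
  refine iff_congr Iff.rfl (and_congr_right fun _ => exists_congr fun j => ?_)
  constructor
  · rintro ⟨a1, a2, a3, a4, a5⟩
    exact ⟨a1, a2, by rwa [← h j (by omega)],
      fun l l1 l2 => by rw [← h l (by omega)]; exact a4 l l1 l2, a5⟩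
  · rintro ⟨a1, a2, a3, a4, a5⟩
    exact ⟨a1, a2, by rwa [h j (by omega)],
      fun l l1 l2 => by rw [h l (by omega)]; exact a4 l l1 l2, a5⟩

theorem Valid3.of_window {p q : ℕ} (hv : Valid3 n v) (hpre : Prefix3 u p) (hp : isZ (u p))
    (hpq : p < q) (hqn : q ≤ n) (hout : ∀ i, q ≤ i → u i = v i)
    (hwin : ∀ i, p ≤ i → i < q → ValidAt n u i) : Valid3 n u := by
  refine ⟨fun i hi => (hout i (by omega)).trans (hv.1 i hi), fun i hi => ?_⟩
  rcases lt_or_ge i p with hip | hip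
  · exact hpre.validAt_of_lt hp (by omega) i hip
  rcases lt_or_ge i q with hiq | hiq
  · exact hwin i hip hiq
  · exact (validAt_congr fun l hl => hout l (by omega)).2 (hv.2 i hi)

theorem NextZero.unique {i j j' : ℕ} (hj : NextZero w i j) (hj' : NextZero w i j') : j = j' := by
  rcases lt_trichotomy j j' with h | h | h
  · exact absurd (hj'.2.2 j hj.1 h) hj.2.1
  · exact h
  · exact absurd (hj.2.2 j' hj'.1 h) hj'.2.1

theorem exists_nextZero_or (n : ℕ) (w : Word) (q : ℕ) :
    (∀ i, q < i → i < n → w i = om) ∨ ∃ j, j < n ∧ NextZero w q j := by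
  classical
  by_cases hex : ∃ j, q < j ∧ j < n ∧ isZ (w j)
  · obtain ⟨h1, h2, h3⟩ := Nat.find_spec hex
    refine Or.inr ⟨Nat.find hex, h2, h1, h3, fun i hi1 hi2 => ?_⟩
    by_contra hne
    exact Nat.find_min hex hi2 ⟨hi1, by omega, hne⟩
  · exact Or.inl fun i h1 h2 => by_contra fun hne => hex ⟨i, h1, h2, hne⟩

theorem Valid3.exists_nextZero (hv : Valid3 n w) {i : ℕ} (hlab : w i = zx ∨ w i = z1) :
    ∃ j, j < n ∧ NextZero w i j ∧ Odd (j - i - 1) := by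
  have hin : i < n := by
    by_contra
    rcases hlab with h | h <;> rw [hv.1 i (by omega)] at h <;> cases h
  obtain ⟨-, j, a1, a2, a3, a4, a5⟩ := (hv.2 i hin).mp hlab
  exact ⟨j, a2, ⟨a1, a3, a4⟩, a5⟩

theorem Valid3.labelled_of_nextZero (hv : Valid3 n w) {i j : ℕ} (hin : i < n) (hz : isZ (w i))
    (hjn : j < n) (hj : NextZero w i j) (ho : Odd (j - i - 1)) : w i = zx ∨ w i = z1 :=
  (hv.2 i hin).mpr ⟨hz, j, hj.1, hjn, hj.2.1, hj.2.2, ho⟩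

theorem Valid3.eq_zm_of_nextZero (hv : Valid3 n w) {i j : ℕ} (hz : isZ (w i))
    (hj : NextZero w i j) (hev : ¬ Odd (j - i - 1)) : w i = zm := by
  refine eq_zm_of_isZ hz fun hlab => ?_
  obtain ⟨j', -, hj', ho⟩ := hv.exists_nextZero hlab
  rw [hj.unique hj'] at hev
  exact hev ho

theorem Valid3.eq_zm_of_forall (hv : Valid3 n w) {i : ℕ} (hz : isZ (w i))
    (hafter : ∀ l, i < l → l < n → w l = om) : w i = zm := by
  refine eq_zm_of_isZ hz fun hlab => ?_
  obtain ⟨j, hjn, hj, -⟩ := hv.exists_nextZero hlab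
  exact hj.2.1 (hafter j hj.1 hjn)

end Validity

section Matchings

variable {n p : ℕ} {v : Word}

theorem exists_mm3_patA_src (hv : Valid3 n v) (hpre : Prefix3 v p) (hn : p + 2 < n)
    (h0 : v p = z1) (h1 : v (p + 1) = om) (h2 : isZ (v (p + 2))) : ∃ x, MM3 n v x := by
  set x : Word := fun i => if i = p then v (p + 2) else if i = p + 2 then om else v i with hx
  have e0 : x p = v (p + 2) := by simp [hx]
  have e2 : x (p + 2) = om := by simp [hx]
  have erest : ∀ i, i ≠ p → i ≠ p + 2 → x i = v i := fun i n1 n2 => by simp [hx, n1, n2]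
  have e1 : x (p + 1) = om := (erest _ (by omega) (by omega)).trans h1
  have hvx : Valid3 n x := by
    refine hv.of_window (hpre.congr fun i hi => erest i (by omega) (by omega)) (by rwa [e0])
      (by omega : p < p + 3) hn (fun i hi => erest i (by omega) (by omega)) fun i hi1 hi2 => ?_
    obtain rfl | rfl | rfl : i = p ∨ i = p + 1 ∨ i = p + 2 := by omega
    · refine ValidAt.transport (t := i + 2) (m := i + 2) (by omega) (by omega) le_rfl e0 h2
        (fun l l1 l2 => ?_) (fun l l1 l2 => by omega)
        (fun l hl => erest l (by omega) (by omega)) (hv.2 (i + 2) hn)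
      obtain rfl | rfl : l = i + 1 ∨ l = i + 2 := by omega
      exacts [e1, e2]
    · exact validAt_of_eq_om e1
    · exact validAt_of_eq_om e2
  exact ⟨x, hv, hvx, p, hpre, Or.inl ⟨hn, h0, h1, h2, e0, e1, e2,
    fun i n1 _ n3 => erest i n1 n3⟩⟩

theorem exists_mm3_patA_tgt (hv : Valid3 n v) (hpre : Prefix3 v p) (hn : p + 2 < n)
    (h0 : isZ (v p)) (h1 : v (p + 1) = om) (h2 : v (p + 2) = om) : ∃ z, MM3 n z v := by
  set z : Word := fun i => if i = p then z1 else if i = p + 2 then v p else v i with hz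
  have e0 : z p = z1 := by simp [hz]
  have e2 : z (p + 2) = v p := by simp [hz]
  have erest : ∀ i, i ≠ p → i ≠ p + 2 → z i = v i := fun i n1 n2 => by simp [hz, n1, n2]
  have e1 : z (p + 1) = om := (erest _ (by omega) (by omega)).trans h1
  have hzpre : Prefix3 z p := hpre.congr fun i hi => erest i (by omega) (by omega)
  have hvz : Valid3 n z := by
    refine hv.of_window hzpre (by simp [e0]) (by omega : p < p + 3) hn
      (fun i hi => erest i (by omega) (by omega)) fun i hi1 hi2 => ?_
    obtain rfl | rfl | rfl : i = p ∨ i = p + 1 ∨ i = p + 2 := by omega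
    · refine validAt_of_labelled (Or.inr e0) hn
        ⟨by omega, by rwa [e2], fun l l1 l2 => by rwa [show l = i + 1 by omega]⟩ ?_
      rw [show i + 2 - i - 1 = 1 by omega]
      exact odd_one
    · exact validAt_of_eq_om e1
    · refine ValidAt.transport (t := p) (m := p + 2) (by omega) le_rfl (by omega) e2 h0
        (fun l l1 l2 => by omega) (fun l l1 l2 => ?_)
        (fun l hl => erest l (by omega) (by omega)) (hv.2 p (by omega))
      obtain rfl | rfl : l = p + 1 ∨ l = p + 2 := by omega
      exacts [h1, h2]
  exact ⟨z, hvz, hv, p, hzpre, Or.inl ⟨hn, e0, e1, by rwa [e2], e2.symm, h1, h2,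
    fun i n1 _ n3 => (erest i n1 n3).symm⟩⟩

theorem exists_mm3_patB_src (hv : Valid3 n v) (hpre : Prefix3 v p) (hn : p + 3 < n)
    (h0 : v p = zm) (h1 : v (p + 1) = z1) (h2 : v (p + 2) = om) (h3 : isZ (v (p + 3))) :
    ∃ x, MM3 n v x := by
  set x : Word := fun i => if i = p + 1 then v (p + 3) else if i = p + 3 then om else v i
    with hx
  have e1 : x (p + 1) = v (p + 3) := by simp [hx]
  have e3 : x (p + 3) = om := by simp [hx]
  have erest : ∀ i, i ≠ p + 1 → i ≠ p + 3 → x i = v i := fun i n1 n2 => by simp [hx, n1, n2]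
  have e0 : x p = zm := (erest _ (by omega) (by omega)).trans h0
  have e2 : x (p + 2) = om := (erest _ (by omega) (by omega)).trans h2
  have hvx : Valid3 n x := by
    refine hv.of_window (hpre.congr fun i hi => erest i (by omega) (by omega)) (by simp [e0])
      (by omega : p < p + 4) hn (fun i hi => erest i (by omega) (by omega)) fun i hi1 hi2 => ?_
    obtain rfl | rfl | rfl | rfl : i = p ∨ i = p + 1 ∨ i = p + 2 ∨ i = p + 3 := by omega
    · refine validAt_of_eq_zm e0 fun j _ hj => ?_
      obtain rfl : j = i + 1 := by
        by_contra
        have := hj.1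
        exact (hj.2.2 (i + 1) (by omega) (by omega) ▸ e1 ▸ h3) rfl
      simp
    · refine ValidAt.transport (t := p + 3) (m := p + 3) (by omega) (by omega) le_rfl e1 h3
        (fun l l1 l2 => ?_) (fun l l1 l2 => by omega)
        (fun l hl => erest l (by omega) (by omega)) (hv.2 (p + 3) hn)
      obtain rfl | rfl : l = p + 2 ∨ l = p + 3 := by omega
      exacts [e2, e3]
    · exact validAt_of_eq_om e2
    · exact validAt_of_eq_om e3
  exact ⟨x, hv, hvx, p, hpre, Or.inr (Or.inl ⟨hn, h0, h1, h2, h3, e1, e2, e3,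
    fun i n1 _ n3 => erest i n1 n3⟩)⟩

theorem exists_mm3_patB_tgt (hv : Valid3 n v) (hpre : Prefix3 v p) (hn : p + 3 < n)
    (h0 : v p = zm) (h1 : isZ (v (p + 1))) (h2 : v (p + 2) = om) (h3 : v (p + 3) = om) :
    ∃ z, MM3 n z v := by
  set z : Word := fun i => if i = p + 1 then z1 else if i = p + 3 then v (p + 1) else v i
    with hz
  have e1 : z (p + 1) = z1 := by simp [hz]
  have e3 : z (p + 3) = v (p + 1) := by simp [hz]
  have erest : ∀ i, i ≠ p + 1 → i ≠ p + 3 → z i = v i := fun i n1 n2 => by simp [hz, n1, n2]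
  have e0 : z p = zm := (erest _ (by omega) (by omega)).trans h0
  have e2 : z (p + 2) = om := (erest _ (by omega) (by omega)).trans h2
  have hzpre : Prefix3 z p := hpre.congr fun i hi => erest i (by omega) (by omega)
  have hvz : Valid3 n z := by
    refine hv.of_window hzpre (by simp [e0]) (by omega : p < p + 4) hn
      (fun i hi => erest i (by omega) (by omega)) fun i hi1 hi2 => ?_
    obtain rfl | rfl | rfl | rfl : i = p ∨ i = p + 1 ∨ i = p + 2 ∨ i = p + 3 := by omega
    · refine validAt_of_eq_zm e0 fun j _ hj => ?_
      obtain rfl : j = i + 1 := by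
        by_contra
        have := hj.1
        exact absurd (hj.2.2 (i + 1) (by omega) (by omega)) (by rw [e1]; decide)
      simp
    · refine validAt_of_labelled (Or.inr e1) hn
        ⟨by omega, by rwa [e3], fun l l1 l2 => by rwa [show l = p + 2 by omega]⟩ ?_
      rw [show p + 3 - (p + 1) - 1 = 1 by omega]
      exact odd_one
    · exact validAt_of_eq_om e2
    · refine ValidAt.transport (t := p + 1) (m := p + 3) (by omega) le_rfl (by omega) e3 h1
        (fun l l1 l2 => by omega) (fun l l1 l2 => ?_)
        (fun l hl => erest l (by omega) (by omega)) (hv.2 (p + 1) (by omega))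
      obtain rfl | rfl : l = p + 2 ∨ l = p + 3 := by omega
      exacts [h2, h3]
  exact ⟨z, hvz, hv, p, hzpre, Or.inr (Or.inl ⟨hn, e0, e1, e2, by rwa [e3], e3.symm, h2, h3,
    fun i n1 _ n3 => (erest i n1 n3).symm⟩)⟩

theorem exists_mm3_patC_src (hv : Valid3 n v) (hpre : Prefix3 v p) (hn : p + 2 < n)
    (h0 : v p = zm) (h1 : v (p + 1) = zm) (h2 : isZ (v (p + 2))) : ∃ x, MM3 n v x := by
  set x : Word := fun i => if i = p then zx else if i = p + 1 then om else v i with hx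
  have e0 : x p = zx := by simp [hx]
  have e1 : x (p + 1) = om := by simp [hx]
  have erest : ∀ i, i ≠ p → i ≠ p + 1 → x i = v i := fun i n1 n2 => by simp [hx, n1, n2]
  have hvx : Valid3 n x := by
    refine hv.of_window (hpre.congr fun i hi => erest i (by omega) (by omega)) (by simp [e0])
      (by omega : p < p + 2) (by omega) (fun i hi => erest i (by omega) (by omega))
      fun i hi1 hi2 => ?_
    obtain rfl | rfl : i = p ∨ i = p + 1 := by omega
    · refine validAt_of_labelled (Or.inl e0) hn ⟨by omega,
        by rwa [erest (i + 2) (by omega) (by omega)],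
        fun l l1 l2 => by rwa [show l = i + 1 by omega]⟩ ?_
      rw [show i + 2 - i - 1 = 1 by omega]
      exact odd_one
    · exact validAt_of_eq_om e1
  exact ⟨x, hv, hvx, p, hpre, Or.inr (Or.inr ⟨hn, h0, h1, h2, e0, e1, erest⟩)⟩

theorem exists_mm3_patC_tgt (hv : Valid3 n v) (hpre : Prefix3 v p) (hn : p + 2 < n)
    (h0 : v p = zx) (h1 : v (p + 1) = om) (h2 : isZ (v (p + 2))) : ∃ z, MM3 n z v := by
  set z : Word := fun i => if i = p then zm else if i = p + 1 then zm else v i with hz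
  have e0 : z p = zm := by simp [hz]
  have e1 : z (p + 1) = zm := by simp [hz]
  have erest : ∀ i, i ≠ p → i ≠ p + 1 → z i = v i := fun i n1 n2 => by simp [hz, n1, n2]
  have e2 : isZ (z (p + 2)) := by rwa [erest (p + 2) (by omega) (by omega)]
  have hzpre : Prefix3 z p := hpre.congr fun i hi => erest i (by omega) (by omega)
  have hvz : Valid3 n z := by
    refine hv.of_window hzpre (by simp [e0]) (by omega : p < p + 2) (by omega)
      (fun i hi => erest i (by omega) (by omega)) fun i hi1 hi2 => ?_
    obtain rfl | rfl : i = p ∨ i = p + 1 := by omega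
    · refine validAt_of_eq_zm e0 fun j _ hj => ?_
      obtain rfl : j = i + 1 := by
        by_contra
        have := hj.1
        exact absurd (hj.2.2 (i + 1) (by omega) (by omega)) (by simp [e1])
      simp
    · refine validAt_of_eq_zm e1 fun j _ hj => ?_
      obtain rfl : j = p + 2 := by
        by_contra
        have := hj.1
        exact absurd (hj.2.2 (p + 2) (by omega) (by omega)) e2
      simp
  exact ⟨z, hvz, hv, p, hzpre, Or.inr (Or.inr ⟨hn, e0, e1, e2, h0, h1,
    fun i n1 n2 => (erest i n1 n2).symm⟩)⟩

end Matchings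

section MatchedPairs

variable {n : ℕ} {z x : Word}

theorem e3_of_merge (hvz : Valid3 n z) (hvx : Valid3 n x) {p : ℕ} (hn : p + 2 < n)
    (h0 : z p = z1) (h1 : z (p + 1) = om) (h2 : isZ (z (p + 2))) (hx0 : x p = z (p + 2))
    (hx2 : x (p + 2) = om) (hrest : ∀ i, i ≠ p → i ≠ p + 2 → x i = z i) : E3 n z x := by
  have hgap : Odd (p + 2 - p - 1) := by rw [show p + 2 - p - 1 = 1 by omega]; exact odd_one
  refine ⟨hvz, hvx, p + 2, hn, h2, hx2, Or.inr ⟨p, by omega, by simp [h0],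
    fun i l1 l2 => by rwa [show i = p + 1 by omega], ?_⟩⟩
  rcases exists_nextZero_or n z (p + 2) with hafter | ⟨j, hjn, hj⟩
  · refine Or.inl ⟨fun i hi => ?_, Or.inl ⟨hgap, by rw [hx0, hvz.eq_zm_of_forall h2 hafter],
      hrest⟩⟩
    rcases lt_or_ge i n with hin | hin
    exacts [hafter i hi hin, hvz.1 i hin]
  refine Or.inr ⟨j, hj.1, hjn, hj.2.1, hj.2.2, ?_⟩
  by_cases hodd : Odd (j - (p + 2) - 1)
  · rcases hvz.labelled_of_nextZero hn h2 hjn hj hodd with hl | hl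
    · exact Or.inl ⟨hgap, hodd, by simp [h0], Or.inr ⟨by simp [hl], by rw [hx0, hl]⟩, hrest⟩
    · exact Or.inl ⟨hgap, hodd, by simp [h0], Or.inl ⟨h0, hl, by rw [hx0, hl]⟩, hrest⟩
  · exact Or.inr (Or.inl ⟨hgap, hodd, by rw [hx0, hvz.eq_zm_of_nextZero h2 hj hodd], hrest⟩)

theorem MM3.e3 (h : MM3 n z x) : E3 n z x := by
  obtain ⟨hvz, hvx, p, -, ⟨hn, h0, h1, h2, hx0, hx1, hx2, hrest⟩ |
    ⟨hn, h0, h1, h2, h3, hx1, hx2, hx3, hrest⟩ | ⟨hn, h0, h1, h2, hx0, hx1, hrest⟩⟩ := h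
  · refine e3_of_merge hvz hvx hn h0 h1 h2 hx0 hx2 fun i n1 n2 => ?_
    by_cases hi : i = p + 1
    · rw [hi, hx1, h1]
    · exact hrest i n1 hi n2
  · refine e3_of_merge hvz hvx (p := p + 1) hn h1 h2 h3 hx1 hx3 fun i n1 n2 => ?_
    by_cases hi : i = p + 2
    · rw [hi, hx2, h2]
    · exact hrest i n1 hi n2
  · refine ⟨hvz, hvx, p + 1, by omega, by simp [h1], hx1, Or.inr ⟨p, by omega, by simp [h0],
      fun i l1 l2 => by omega, Or.inr ⟨p + 2, by omega, hn, h2, fun i l1 l2 => by omega,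
      Or.inr (Or.inr (Or.inr ⟨?_, ?_, Or.inl hx0, hrest⟩))⟩⟩⟩
    all_goals rw [Nat.odd_iff]; omega

end MatchedPairs

def IsBlock (v : Word) (p : ℕ) : Prop := v p = zm ∧ v (p + 1) = zx ∧ v (p + 2) = om

/-- The possible ends `0`, `0 1`, `0 0`, `0 0 1` of a critical word, starting at `p`. -/
def CritTail (n p : ℕ) (v : Word) : Prop :=
  v p = zm ∧ (n = p + 1 ∨ (n = p + 2 ∧ v (p + 1) = om) ∨ (n = p + 2 ∧ v (p + 1) = zm) ∨
    (n = p + 3 ∧ v (p + 1) = zm ∧ v (p + 2) = om))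

namespace Critical3

variable {n p : ℕ} {v : Word}

theorem not_om_om (h : Critical3 n v) (hpre : Prefix3 v p) (hz : isZ (v p)) (hn : p + 2 < n) :
    ¬ (v (p + 1) = om ∧ v (p + 2) = om) := fun ⟨h1, h2⟩ =>
  let ⟨_, hm⟩ := exists_mm3_patA_tgt h.1 hpre hn hz h1 h2
  h.2.2 _ hm

theorem not_zm_om_om (h : Critical3 n v) (hpre : Prefix3 v p) (h0 : v p = zm)
    (hz : isZ (v (p + 1))) (hn : p + 3 < n) : ¬ (v (p + 2) = om ∧ v (p + 3) = om) :=
  fun ⟨h2, h3⟩ =>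
  let ⟨_, hm⟩ := exists_mm3_patB_tgt h.1 hpre hn h0 hz h2 h3
  h.2.2 _ hm

theorem eq_zm (h : Critical3 n v) (hpre : Prefix3 v p) (hz : isZ (v p)) : v p = zm := by
  refine eq_zm_of_isZ hz fun hlab => ?_
  obtain ⟨j, hjn, hj, ho⟩ := h.1.exists_nextZero hlab
  have := hj.1
  obtain rfl | hj4 : j = p + 2 ∨ p + 4 ≤ j := by rw [Nat.odd_iff] at ho; omega
  · have h1 := hj.2.2 (p + 1) (by omega) (by omega)
    rcases hlab with h0 | h0
    · obtain ⟨_, hm⟩ := exists_mm3_patC_tgt h.1 hpre hjn h0 h1 hj.2.1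
      exact h.2.2 _ hm
    · obtain ⟨_, hm⟩ := exists_mm3_patA_src h.1 hpre hjn h0 h1 hj.2.1
      exact h.2.1 _ hm
  · exact h.not_om_om hpre hz (by omega)
      ⟨hj.2.2 _ (by omega) (by omega), hj.2.2 _ (by omega) (by omega)⟩

theorem eq_zm_succ (h : Critical3 n v) (hpre : Prefix3 v p) (h0 : v p = zm)
    (hz : isZ (v (p + 1))) (hnb : ¬ IsBlock v p) : v (p + 1) = zm := by
  refine eq_zm_of_isZ hz fun hlab => ?_
  obtain ⟨j, hjn, hj, ho⟩ := h.1.exists_nextZero hlab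
  have := hj.1
  obtain rfl | hj5 : j = p + 3 ∨ p + 5 ≤ j := by rw [Nat.odd_iff] at ho; omega
  · have h2 := hj.2.2 (p + 2) (by omega) (by omega)
    rcases hlab with h1 | h1
    · exact hnb ⟨h0, h1, h2⟩
    · obtain ⟨_, hm⟩ := exists_mm3_patB_src h.1 hpre hjn h0 h1 h2 hj.2.1
      exact h.2.1 _ hm
  · exact h.not_zm_om_om hpre h0 hz (by omega)
      ⟨hj.2.2 _ (by omega) (by omega), hj.2.2 _ (by omega) (by omega)⟩

theorem critTail (h : Critical3 n v) (hpre : Prefix3 v p) (hpn : p < n) (hz : isZ (v p))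
    (hnb : ¬ IsBlock v p) : CritTail n p v := by
  have h0 := h.eq_zm hpre hz
  refine ⟨h0, ?_⟩
  rcases exists_nextZero_or n v p with hafter | ⟨j, hjn, hj⟩
  · have : n ≤ p + 2 := by
      by_contra
      exact h.not_om_om hpre hz (by omega)
        ⟨hafter _ (by omega) (by omega), hafter _ (by omega) (by omega)⟩
    obtain hn | hn : n = p + 1 ∨ n = p + 2 := by omega
    exacts [Or.inl hn, Or.inr (Or.inl ⟨hn, hafter _ (by omega) (by omega)⟩)]
  have hev : ¬ Odd (j - p - 1) := fun ho => by
    rcases h.1.labelled_of_nextZero hpn hz hjn hj ho with h' | h' <;> simp [h0] at h'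
  have := hj.1
  obtain rfl | hj3 : j = p + 1 ∨ p + 3 ≤ j := by rw [Nat.odd_iff] at hev; omega
  swap
  · exact absurd ⟨hj.2.2 _ (by omega) (by omega), hj.2.2 _ (by omega) (by omega)⟩
      (h.not_om_om hpre hz (by omega))
  have h1 := h.eq_zm_succ hpre h0 hj.2.1 hnb
  rcases exists_nextZero_or n v (p + 1) with hafter | ⟨j, hjn', hj'⟩
  · have : n ≤ p + 3 := by
      by_contra
      exact h.not_zm_om_om hpre h0 hj.2.1 (by omega)
        ⟨hafter _ (by omega) (by omega), hafter _ (by omega) (by omega)⟩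
    obtain hn | hn : n = p + 2 ∨ n = p + 3 := by omega
    exacts [Or.inr (Or.inr (Or.inl ⟨hn, h1⟩)),
      Or.inr (Or.inr (Or.inr ⟨hn, h1, hafter _ (by omega) (by omega)⟩))]
  have hev' : ¬ Odd (j - (p + 1) - 1) := fun ho => by
    rcases h.1.labelled_of_nextZero hjn hj.2.1 hjn' hj' ho with h' | h' <;> simp [h1] at h'
  have := hj'.1
  obtain rfl | hj4 : j = p + 2 ∨ p + 4 ≤ j := by rw [Nat.odd_iff] at hev'; omega
  · obtain ⟨_, hm⟩ := exists_mm3_patC_src h.1 hpre hjn' h0 h1 hj'.2.1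
    exact absurd hm (h.2.1 _)
  · exact absurd ⟨hj'.2.2 _ (by omega) (by omega), hj'.2.2 _ (by omega) (by omega)⟩
      (h.not_zm_om_om hpre h0 hj.2.1 (by omega))

theorem isZ_of_isBlock (h : Critical3 n v) (hpre : Prefix3 v p) (hb : IsBlock v p) :
    p + 3 < n ∧ isZ (v (p + 3)) := by
  obtain ⟨h0, h1, h2⟩ := hb
  obtain ⟨j, hjn, hj, ho⟩ := h.1.exists_nextZero (Or.inl h1)
  have : j ≠ p + 2 := fun hj2 => hj.2.1 (hj2 ▸ h2)
  have := hj.1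
  obtain rfl | hj5 : j = p + 3 ∨ p + 5 ≤ j := by rw [Nat.odd_iff] at ho; omega
  · exact ⟨hjn, hj.2.1⟩
  · obtain ⟨_, hm⟩ := exists_mm3_patB_tgt h.1 hpre (by omega) h0 (by simp [h1]) h2
      (hj.2.2 _ (by omega) (by omega))
    exact absurd hm (h.2.2 _)

theorem exists_blocks (h : Critical3 n v) :
    ∃ a b, (∀ i < a, v i = om) ∧ (∀ s < b, IsBlock v (a + 3 * s)) ∧
      ((a = n ∧ b = 0) ∨ CritTail n (a + 3 * b) v) := by
  classical
  by_cases hall : ∀ i < n, v i = om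
  · exact ⟨n, 0, hall, by simp, Or.inl ⟨rfl, rfl⟩⟩
  have hex : ∃ i, i < n ∧ isZ (v i) := by simpa [isZ] using hall
  obtain ⟨han, haz⟩ := Nat.find_spec hex
  have hom : ∀ i < Nat.find hex, v i = om := fun i hi =>
    by_contra fun hne => Nat.find_min hex hi ⟨by omega, hne⟩
  have hexb : ∃ b, ¬ IsBlock v (Nat.find hex + 3 * b) := ⟨n, fun hb => by
    simpa [h.1.1 (Nat.find hex + 3 * n + 1) (by omega)] using hb.2.1⟩
  set a := Nat.find hex
  set b := Nat.find hexb
  have hblk : ∀ s < b, IsBlock v (a + 3 * s) := fun s hs => not_not.1 (Nat.find_min hexb hs)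
  have hz : a + 3 * b < n ∧ isZ (v (a + 3 * b)) := by
    rcases Nat.eq_zero_or_pos b with hb | hb
    · simpa [hb] using And.intro han haz
    · have := h.isZ_of_isBlock ⟨a, b - 1, rfl, hom, fun s hs => hblk s (by omega)⟩
        (hblk (b - 1) (by omega))
      rwa [show a + 3 * (b - 1) + 3 = a + 3 * b by omega] at this
  exact ⟨a, b, hom, hblk, Or.inr (h.critTail ⟨a, b, rfl, hom, hblk⟩ hz.1 hz.2
    (Nat.find_spec hexb))⟩

end Critical3

theorem count_om_of_blocks {v : Word} {a : ℕ} (hom : ∀ i < a, v i = om) :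
    ∀ {b : ℕ}, (∀ s < b, IsBlock v (a + 3 * s)) → Nat.count (fun i => v i = om) (a + 3 * b) = a + b
  | 0, _ => by simpa using Nat.count_of_forall hom
  | b + 1, hblk => by
    obtain ⟨h0, h1, h2⟩ := hblk b (by omega)
    rw [show a + 3 * (b + 1) = a + 3 * b + 2 + 1 by ring, Nat.count_succ, Nat.count_succ,
      Nat.count_succ, count_om_of_blocks hom fun s hs => hblk s (by omega)]
    simp only [h0, h1, h2, reduceCtorEq, ↓reduceIte, add_zero]
    omega

theorem Critical3.eq_om_of_lt {n : ℕ} {v : Word} (h : Critical3 n v) {i : ℕ}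
    (hi : 2 * (i : ℤ) + 1 < 2 * n + 3 * hdeg3 n v) : v i = om := by
  obtain ⟨a, b, hom, hblk, ⟨rfl, rfl⟩ | ⟨h0, ht⟩⟩ := h.exists_blocks
  · rw [hdeg3, card_filter_eq_count, Nat.count_of_forall hom] at hi
    exact hom i (by omega)
  · have hc := count_om_of_blocks hom hblk
    rw [hdeg3, card_filter_eq_count] at hi
    apply hom
    rcases ht with rfl | ⟨rfl, h1⟩ | ⟨rfl, h1⟩ | ⟨rfl, h1, h2⟩ <;>
      simp only [Nat.count_succ, reduceCtorEq, ↓reduceIte, add_zero, *] at hi <;> omega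

section Paths

variable {n : ℕ}

def GPath3.mapPrependOnes (m : ℕ) :
    ∀ {a b : Word}, GPath3 n a b → GPath3 (n + m) (prependOnes m a) (prependOnes m b)
  | _, _, .nil a => .nil _
  | _, _, .up e hne p =>
    .up (e3_prependOnes_iff.2 e) (fun h => hne (mm3_prependOnes_iff.1 h)) (p.mapPrependOnes m)
  | _, _, .down e p => .down (mm3_prependOnes_iff.2 e) (p.mapPrependOnes m)

theorem downs3_mapPrependOnes (m : ℕ) : ∀ {a b : Word} (p : GPath3 n a b),
    downs3 (p.mapPrependOnes m) = downs3 p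
  | _, _, .nil _ => rfl
  | _, _, .up _ _ p => downs3_mapPrependOnes m p
  | _, _, .down _ p => congrArg (· + 1) (downs3_mapPrependOnes m p)

theorem GPath3.mapPrependOnes_injective (m : ℕ) {a b : Word} :
    Function.Injective (GPath3.mapPrependOnes (n := n) m (a := a) (b := b)) := by
  intro p
  induction p with
  | nil a =>
    intro q h
    cases q <;> first | rfl | cases h
  | up e hne p ih =>
    intro q h
    cases q with
    | up e' hne' q =>
      injection h with _ hb _ hq
      cases prependOnes_injective m hb
      rw [ih (eq_of_heq hq)]
    | _ => cases h
  | down e p ih =>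
    intro q h
    cases q with
    | down e' q =>
      injection h with _ hb _ hq
      cases prependOnes_injective m hb
      rw [ih (eq_of_heq hq)]
    | _ => cases h

-- Edges and matched pairs at `prependOnes m a` stay among words starting with `m` ones.
theorem GPath3.exists_mapPrependOnes_heq {m : ℕ} {A B : Word} (q : GPath3 (n + m) A B) :
    ∀ {a b : Word}, A = prependOnes m a → B = prependOnes m b →
      ∃ p : GPath3 n a b, HEq (p.mapPrependOnes m) q := by
  induction q with
  | nil A =>
    rintro a b rfl hb
    cases prependOnes_injective m hb
    exact ⟨.nil a, HEq.rfl⟩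
  | up e hne q ih =>
    rintro a b rfl rfl
    obtain ⟨c, rfl⟩ := e.exists_eq_prependOnes
    obtain ⟨p, hp⟩ := ih rfl rfl
    refine ⟨.up (e3_prependOnes_iff.1 e) (fun h => hne (mm3_prependOnes_iff.2 h)) p, ?_⟩
    rw [GPath3.mapPrependOnes, eq_of_heq hp]
  | down e q ih =>
    rintro a b rfl rfl
    obtain ⟨c, rfl⟩ := e.exists_eq_prependOnes_left
    obtain ⟨p, hp⟩ := ih rfl rfl
    refine ⟨.down (mm3_prependOnes_iff.1 e) p, ?_⟩
    rw [GPath3.mapPrependOnes, eq_of_heq hp]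

theorem GPath3.mapPrependOnes_bijective (m : ℕ) (a b : Word) :
    Function.Bijective (GPath3.mapPrependOnes (n := n) m (a := a) (b := b)) :=
  ⟨mapPrependOnes_injective m, fun q =>
    let ⟨p, hp⟩ := q.exists_mapPrependOnes_heq rfl rfl
    ⟨p, eq_of_heq hp⟩⟩

end Paths

section Morse

open CategoryTheory

universe v u

variable {𝒞 : Type u} [Category.{v} 𝒞]

theorem eq_conj_of_comp_eq_id {X Y X' Y' : 𝒞} (eX : X' = X) (eY : Y' = Y) {f : X ⟶ Y}
    {g : Y ⟶ X} {f' : X' ⟶ Y'} {g' : Y' ⟶ X'} (hf' : f' = eqToHom eX ≫ f ≫ eqToHom eY.symm)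
    (hfg : f ≫ g = 𝟙 X) (hgf' : g' ≫ f' = 𝟙 Y') : g' = eqToHom eY ≫ g ≫ eqToHom eX.symm := by
  subst eX eY
  simp only [eqToHom_refl, Category.id_comp, Category.comp_id] at hf' ⊢
  subst hf'
  rw [← Category.comp_id g', ← hfg, ← Category.assoc, hgf', Category.id_comp]

variable {n m : ℕ} {cell cell2 : Word → 𝒞}
  {dv : ∀ a b : Word, (cell a ⟶ cell b)} {dv2 : ∀ a b : Word, (cell2 a ⟶ cell2 b)}
  {gv : ∀ a b : Word, (cell b ⟶ cell a)} {gv2 : ∀ a b : Word, (cell2 b ⟶ cell2 a)}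

theorem pathHom3_mapPrependOnes
    (hg : ∀ z x, MM3 n z x → dv z x ≫ gv z x = 𝟙 (cell z))
    (hg2 : ∀ z x, MM3 (n + m) z x → gv2 z x ≫ dv2 z x = 𝟙 (cell2 x))
    (hcell : ∀ w : Word, cell2 (prependOnes m w) = cell w)
    (hd : ∀ a b, E3 n a b → dv2 (prependOnes m a) (prependOnes m b)
      = eqToHom (hcell a) ≫ dv a b ≫ eqToHom (hcell b).symm)
    {a b : Word} (p : GPath3 n a b) :
    pathHom3 cell2 dv2 gv2 (n + m) (p.mapPrependOnes m)
      = eqToHom (hcell a) ≫ pathHom3 cell dv gv n p ≫ eqToHom (hcell b).symm := by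
  induction p with
  | nil a => simp [GPath3.mapPrependOnes, pathHom3]
  | up e hne p ih =>
    simp only [GPath3.mapPrependOnes, pathHom3]
    rw [ih, hd _ _ e]
    simp
  | down e p ih =>
    simp only [GPath3.mapPrependOnes, pathHom3]
    rw [ih, eq_conj_of_comp_eq_id (hcell _) (hcell _) (hd _ _ e.e3) (hg _ _ e)
      (hg2 _ _ (mm3_prependOnes_iff.2 e))]
    simp

theorem mEntry3_prependOnes [Preadditive 𝒞]
    (hg : ∀ z x, MM3 n z x → dv z x ≫ gv z x = 𝟙 (cell z))
    (hg2 : ∀ z x, MM3 (n + m) z x → gv2 z x ≫ dv2 z x = 𝟙 (cell2 x))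
    (hcell : ∀ w : Word, cell2 (prependOnes m w) = cell w)
    (hd : ∀ a b, E3 n a b → dv2 (prependOnes m a) (prependOnes m b)
      = eqToHom (hcell a) ≫ dv a b ≫ eqToHom (hcell b).symm)
    (z x : Word) :
    mEntry3 cell dv gv n z x ≫ eqToHom (hcell x).symm
      = eqToHom (hcell z).symm ≫ mEntry3 cell2 dv2 gv2 (n + m) (prependOnes m z) (prependOnes m x) := by
  let φ : (cell z ⟶ cell x) →+ (cell2 (prependOnes m z) ⟶ cell2 (prependOnes m x)) :=
    AddMonoidHom.mk' (fun f => eqToHom (hcell z) ≫ f ≫ eqToHom (hcell x).symm) fun f g => by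
      simp only [Preadditive.add_comp, Preadditive.comp_add]
  have hφ : Function.Injective φ := fun f g hfg => by
    simpa [φ] using congrArg (eqToHom (hcell z).symm ≫ · ≫ eqToHom (hcell x)) hfg
  have hsum : ∑ᶠ p : GPath3 n z x, φ (((-1 : ℤ) ^ downs3 p) • pathHom3 cell dv gv n p)
      = ∑ᶠ q : GPath3 (n + m) (prependOnes m z) (prependOnes m x),
          ((-1 : ℤ) ^ downs3 q) • pathHom3 cell2 dv2 gv2 (n + m) q :=
    finsum_eq_of_bijective _ (GPath3.mapPrependOnes_bijective m z x) fun p => by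
      rw [downs3_mapPrependOnes, pathHom3_mapPrependOnes hg hg2 hcell hd]
      simp [φ]
  unfold mEntry3
  rw [← hsum, ← AddMonoidHom.map_finsum_of_injective φ hφ]
  simp [φ]

end Morse

def Crit3T.prependOnesEquiv {n m : ℕ} {t : ℤ} (h : ∀ v : Crit3T (n + m) t, ∀ i < m, v.1 i = om) :
    Crit3T n t ≃ Crit3T (n + m) t where
  toFun c := ⟨prependOnes m c.1, critical3_prependOnes_iff.2 c.2.1,
    (hdeg3_prependOnes c.1).trans c.2.2⟩
  invFun c := ⟨dropFirst m c.1,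
    critical3_prependOnes_iff.1 (by rw [prependOnes_dropFirst (h c)]; exact c.2.1),
    by rw [← hdeg3_prependOnes, prependOnes_dropFirst (h c)]; exact c.2.2⟩
  left_inv c := Subtype.ext (dropFirst_prependOnes c.1)
  right_inv c := Subtype.ext (prependOnes_dropFirst (h c))

open CategoryTheory

universe v u

theorem stmt15 {𝒞 : Type u} [Category.{v} 𝒞] [Preadditive 𝒞] (k : ℕ)
    (cell cell2 : Word → 𝒞)
    (dv : ∀ a b : Word, (cell a ⟶ cell b)) (dv2 : ∀ a b : Word, (cell2 a ⟶ cell2 b))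
    (gv : ∀ a b : Word, (cell b ⟶ cell a)) (gv2 : ∀ a b : Word, (cell2 b ⟶ cell2 a))
    (hg : ∀ z x, MM3 (2 * k) z x →
      dv z x ≫ gv z x = 𝟙 (cell z) ∧ gv z x ≫ dv z x = 𝟙 (cell x))
    (hg2 : ∀ z x, MM3 (2 * k + 6) z x →
      dv2 z x ≫ gv2 z x = 𝟙 (cell2 z) ∧ gv2 z x ≫ dv2 z x = 𝟙 (cell2 x))
    -- cells and matrix elements are invariant under prepending a full twist
    (hcell : ∀ w : Word, cell2 (prep6 w) = cell w)
    (hd : ∀ a b, E3 (2 * k) a b →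
      dv2 (prep6 a) (prep6 b) = eqToHom (hcell a) ≫ dv a b ≫ eqToHom (hcell b).symm) :
    ∃ (e : ∀ t : ℤ, -(((4 * k) / 3 : ℕ) : ℤ) ≤ t → (Crit3T (2 * k) t ≃ Crit3T (2 * k + 6) t))
      (ψ : ∀ (t : ℤ) (h : -(((4 * k) / 3 : ℕ) : ℤ) ≤ t) (c : Crit3T (2 * k) t),
        cell c.1 ≅ cell2 ((e t h c).1)),
      (∀ (t : ℤ) (h : -(((4 * k) / 3 : ℕ) : ℤ) ≤ t)
          (c : Crit3T (2 * k) t) (c' : Crit3T (2 * k) (t + 1)),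
        mEntry3 cell dv gv (2 * k) c.1 c'.1 ≫ (ψ (t + 1) (by omega) c').hom
          = (ψ t h c).hom ≫
            mEntry3 cell2 dv2 gv2 (2 * k + 6) ((e t h c).1) ((e (t + 1) (by omega) c').1))
      ∧ ∀ (t : ℤ) (h : -(((4 * k) / 3 : ℕ) : ℤ) ≤ t) (c : Crit3T (2 * k) t),
          qsh3 (2 * k + 6) ((e t h c).1) + 6 = qsh3 (2 * k) c.1 := by
  have hlead (t : ℤ) (ht : -(((4 * k) / 3 : ℕ) : ℤ) ≤ t) (v : Crit3T (2 * k + 6) t) :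
      ∀ i < 6, v.1 i = om := fun i hi => v.2.1.eq_om_of_lt (by rw [v.2.2]; push_cast; omega)
  refine ⟨fun t ht => Crit3T.prependOnesEquiv (hlead t ht),
    fun t ht c => eqToIso (hcell c.1).symm, fun t ht c c' => ?_,
    fun t ht c => qsh3_prependOnes (m := 6) c.1⟩
  -- `prep6` is `prependOnes 6` by definition
  exact mEntry3_prependOnes (m := 6) (fun z x h => (hg z x h).1) (fun z x h => (hg2 z x h).2)
    hcell hd c.1 c'.1

end Stmt15
end
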